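/- arXiv:2010.06319 — 2 statements merged into one kernel-verified Lean document; each statement's English description precedes it below -/
import Mathlib

section
/- I-matchings: for any rewrite rule L ← K → R (a span of monomorphisms in LHyp_Σ with K edgeless) and any linear hypergraph G, every monomorphism L → G in LHyp_Σ is an I-matching; that is, the composite K → L → G has a pushout complement K → C → G in LHyp_Σ. -/
/-!
A monomorphism `m : L → G` of `LHyp_Σ` is injective on target vertices, source vertices and
edges: test it against the two projections of its kernel pair `L ×_G L`. For injective `m`,
the pushout complement `C` is `G` with `m(L)` removed except for `m(k(K))`. As `K` has no
edges, the vertices of `m(k(K))` are interface vertices of `G`, so no edge of `C` loses a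
vertex, and since `ω` commutes with `m`, it maps the target vertices of `C` onto its source
vertices: `C` is again a linear hypergraph. `G` is covered by `m(L)` and `C`, which overlap in
`m(k(K))`; a cocone `(f, g)` therefore glues to the map that is `f ∘ m⁻¹` on `m(L)` and `g`
on `C`, and this cover also makes the glued map unique.
-/


namespace Paper

/-- A hypergraph signature: a set of edge labels with arities. -/
structure Sig : Type 1 where
  labels : Type
  dom : labels → ℕ
  cod : labels → ℕ

variable {Sg : Sig}

/-- Raw data of a labelled linear hypergraph over `Sg`, with atoms 𝔸 := ℕ.
`T`/`S` are the (totally ordered, as lists) target/source vertices,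
`E` the set of edges, `ell`/`r` assign vertices to an edge (`some e`) or the
interface (`none`), `conn` is the connections function ω, and `lab` labels edges. -/
structure LinHyp (Sg : Sig) where
  T : List ℕ
  S : List ℕ
  E : Finset ℕ
  ell : ℕ → Option ℕ
  r : ℕ → Option ℕ
  conn : ℕ → ℕ
  lab : ℕ → Option Sg.labels

namespace LinHyp

def inputs (F : LinHyp Sg) : List ℕ := F.T.filter fun v => F.ell v = none
def outputs (F : LinHyp Sg) : List ℕ := F.S.filter fun v => F.r v = none
def targetsOf (F : LinHyp Sg) (e : ℕ) : List ℕ := F.T.filter fun v => F.ell v = some e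
def sourcesOf (F : LinHyp Sg) (e : ℕ) : List ℕ := F.S.filter fun v => F.r v = some e

/-- Well-formedness: the conditions making the raw data a genuine labelled
linear hypergraph (T, S disjoint duplicate-free, ω a bijection T → S,
edges labelled with correct arities). -/
structure WF (F : LinHyp Sg) : Prop where
  nodupT : F.T.Nodup
  nodupS : F.S.Nodup
  disjTS : ∀ v ∈ F.T, v ∉ F.S
  ell_mem : ∀ v ∈ F.T, ∀ e, F.ell v = some e → e ∈ F.E
  r_mem : ∀ v ∈ F.S, ∀ e, F.r v = some e → e ∈ F.E
  conn_mem : ∀ v ∈ F.T, F.conn v ∈ F.S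
  conn_inj : ∀ v₁ ∈ F.T, ∀ v₂ ∈ F.T, F.conn v₁ = F.conn v₂ → v₁ = v₂
  conn_surj : ∀ w ∈ F.S, ∃ v ∈ F.T, F.conn v = w
  lab_some : ∀ e ∈ F.E, (F.lab e).isSome
  arity_src : ∀ e ∈ F.E, ∀ l, F.lab e = some l → (F.sourcesOf e).length = Sg.dom l
  arity_tgt : ∀ e ∈ F.E, ∀ l, F.lab e = some l → (F.targetsOf e).length = Sg.cod l

/-- `F` has type `m → n`: it has `m` inputs and `n` outputs. -/
def HasType (F : LinHyp Sg) (m n : ℕ) : Prop :=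
  F.inputs.length = m ∧ F.outputs.length = n

/-- Renaming a hypergraph along a map `f` on atoms with (relative) inverse `g`. -/
def rename (f g : ℕ → ℕ) (F : LinHyp Sg) : LinHyp Sg where
  T := F.T.map f
  S := F.S.map f
  E := F.E.image f
  ell := fun v => (F.ell (g v)).map f
  r := fun v => (F.r (g v)).map f
  conn := fun v => f (F.conn (g v))
  lab := fun e => F.lab (g e)

/-- Rename into even atoms. -/
def renL (F : LinHyp Sg) : LinHyp Sg := rename (fun k => 2 * k) (fun k => k / 2) F
/-- Rename into odd atoms. -/
def renR (F : LinHyp Sg) : LinHyp Sg := rename (fun k => 2 * k + 1) (fun k => k / 2) F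

/-- Composition of two hypergraphs with disjoint atoms. -/
def compAux (F G : LinHyp Sg) : LinHyp Sg where
  T := F.T ++ G.T.filter (fun v => (G.ell v).isSome)
  S := F.S.filter (fun v => (F.r v).isSome) ++ G.S
  E := F.E ∪ G.E
  ell := fun v => if v ∈ F.T then F.ell v else G.ell v
  r := fun v => if v ∈ G.S then G.r v else F.r v
  conn := fun v =>
    if v ∈ F.T then
      if (F.r (F.conn v)).isSome then F.conn v
      else G.conn (G.inputs.getD (F.outputs.idxOf (F.conn v)) 0)
    else G.conn v
  lab := fun e => if e ∈ F.E then F.lab e else G.lab e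

/-- Composition `F ⨾ G` (after renaming apart). -/
def comp (F G : LinHyp Sg) : LinHyp Sg := compAux (renL F) (renR G)

/-- Tensor of two hypergraphs with disjoint atoms. -/
def tensorAux (F G : LinHyp Sg) : LinHyp Sg where
  T := F.T ++ G.T
  S := F.S ++ G.S
  E := F.E ∪ G.E
  ell := fun v => if v ∈ F.T then F.ell v else G.ell v
  r := fun v => if v ∈ F.S then F.r v else G.r v
  conn := fun v => if v ∈ F.T then F.conn v else G.conn v
  lab := fun e => if e ∈ F.E then F.lab e else G.lab e

/-- Monoidal tensor `F ⊗ G` (after renaming apart). -/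
def tensor (F G : LinHyp Sg) : LinHyp Sg := tensorAux (renL F) (renR G)

/-- The identity hypergraph `id_n`. -/
def idH (Sg : Sig) (n : ℕ) : LinHyp Sg where
  T := (List.range n).map fun i => 2 * i
  S := (List.range n).map fun i => 2 * i + 1
  E := ∅
  ell := fun _ => none
  r := fun _ => none
  conn := fun v => v + 1
  lab := fun _ => none

/-- The swap hypergraph `σ_{m,n} : m + n → n + m`. -/
def swapH (Sg : Sig) (m n : ℕ) : LinHyp Sg where
  T := (List.range (m + n)).map fun i => 2 * i
  S := (List.range (n + m)).map fun i => 2 * i + 1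
  E := ∅
  ell := fun _ => none
  r := fun _ => none
  conn := fun v => if v / 2 < m then 2 * (n + v / 2) + 1 else 2 * (v / 2 - m) + 1
  lab := fun _ => none

/-- Trace of a single wire: delete the first input and first output, and
connect the vertex that connected to the first output to ω of the first input. -/
def trace1 (F : LinHyp Sg) : LinHyp Sg :=
  let i0 := F.inputs.getD 0 0
  let o0 := F.outputs.getD 0 0
  { T := F.T.erase i0
    S := F.S.erase o0
    E := F.E
    ell := F.ell
    r := F.r
    conn := fun v => if F.conn v = o0 then F.conn i0 else F.conn v
    lab := F.lab }

/-- The trace `Tr^x(F)`. -/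
def traceH (x : ℕ) (F : LinHyp Sg) : LinHyp Sg := trace1^[x] F

/-- A homomorphism of labelled linear hypergraphs. -/
structure Hom (F G : LinHyp Sg) where
  hT : ℕ → ℕ
  hS : ℕ → ℕ
  hE : ℕ → ℕ
  memT : ∀ v ∈ F.T, hT v ∈ G.T
  memS : ∀ v ∈ F.S, hS v ∈ G.S
  memE : ∀ e ∈ F.E, hE e ∈ G.E
  ell_comm : ∀ v ∈ F.T, G.ell (hT v) = (F.ell v).map hE
  r_comm : ∀ v ∈ F.S, G.r (hS v) = (F.r v).map hE
  conn_comm : ∀ v ∈ F.T, hS (F.conn v) = G.conn (hT v)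
  lab_comm : ∀ e ∈ F.E, G.lab (hE e) = F.lab e
  src_ord : ∀ e ∈ F.E, G.sourcesOf (hE e) = (F.sourcesOf e).map hS
  tgt_ord : ∀ e ∈ F.E, G.targetsOf (hE e) = (F.targetsOf e).map hT

/-- An isomorphism of labelled linear hypergraphs: a homomorphism with
bijective components which preserves inputs and outputs with their order. -/
structure Iso (F G : LinHyp Sg) extends Hom F G where
  injT : ∀ v₁ ∈ F.T, ∀ v₂ ∈ F.T, hT v₁ = hT v₂ → v₁ = v₂
  surjT : ∀ w ∈ G.T, ∃ v ∈ F.T, hT v = w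
  injS : ∀ v₁ ∈ F.S, ∀ v₂ ∈ F.S, hS v₁ = hS v₂ → v₁ = v₂
  surjS : ∀ w ∈ G.S, ∃ v ∈ F.S, hS v = w
  injE : ∀ e₁ ∈ F.E, ∀ e₂ ∈ F.E, hE e₁ = hE e₂ → e₁ = e₂
  surjE : ∀ e' ∈ G.E, ∃ e ∈ F.E, hE e = e'
  inputs_ord : F.inputs.map hT = G.inputs
  outputs_ord : F.outputs.map hS = G.outputs

/-- `F ≅ G` : the two linear hypergraphs are isomorphic. -/
def Isom (F G : LinHyp Sg) : Prop := Nonempty (Iso F G)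

end LinHyp

end Paper

namespace Paper

open CategoryTheory

variable {Sg : Sig}

/-- A homomorphism of labelled linear hypergraphs: maps on target vertices,
source vertices and edges commuting with `ℓ`, `r`, `ω` and preserving labels
and the orders of each edge's sources and targets.  (The maps are normalised
to be the identity outside the carriers, so that they are determined by their
action on the carriers.) -/
@[ext]
structure LHom (F G : LinHyp Sg) where
  hT : ℕ → ℕ
  hS : ℕ → ℕ
  hE : ℕ → ℕ
  normT : ∀ v, v ∉ F.T → hT v = v
  normS : ∀ v, v ∉ F.S → hS v = v
  normE : ∀ e, e ∉ F.E → hE e = e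
  memT : ∀ v ∈ F.T, hT v ∈ G.T
  memS : ∀ v ∈ F.S, hS v ∈ G.S
  memE : ∀ e ∈ F.E, hE e ∈ G.E
  ell_comm : ∀ v ∈ F.T, G.ell (hT v) = (F.ell v).map hE
  r_comm : ∀ v ∈ F.S, G.r (hS v) = (F.r v).map hE
  conn_comm : ∀ v ∈ F.T, hS (F.conn v) = G.conn (hT v)
  lab_comm : ∀ e ∈ F.E, G.lab (hE e) = F.lab e
  src_ord : ∀ e ∈ F.E, G.sourcesOf (hE e) = (F.sourcesOf e).map hS
  tgt_ord : ∀ e ∈ F.E, G.targetsOf (hE e) = (F.targetsOf e).map hT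

/-- Objects of the category `LHyp_Σ`: well-formed labelled linear hypergraphs. -/
def LHypObj (Sg : Sig) := {F : LinHyp Sg // F.WF}

/-- The identity homomorphism of linear hypergraphs. -/
def LHom.idh (F : LinHyp Sg) : LHom F F where
  hT := fun v => v
  hS := fun v => v
  hE := fun e => e
  normT := fun _ _ => rfl
  normS := fun _ _ => rfl
  normE := fun _ _ => rfl
  memT := fun _ h => h
  memS := fun _ h => h
  memE := fun _ h => h
  ell_comm := fun v _ => by simp
  r_comm := fun v _ => by simp
  conn_comm := fun v _ => rfl
  lab_comm := fun e _ => rfl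
  src_ord := fun e _ => by simp
  tgt_ord := fun e _ => by simp

/-- Composition of homomorphisms of (well-formed) linear hypergraphs. -/
def LHom.comph {F G H : LinHyp Sg} (hF : F.WF) (f : LHom F G) (g : LHom G H) :
    LHom F H where
  hT := fun v => if v ∈ F.T then g.hT (f.hT v) else v
  hS := fun v => if v ∈ F.S then g.hS (f.hS v) else v
  hE := fun e => if e ∈ F.E then g.hE (f.hE e) else e
  normT := fun v hv => by simp [hv]
  normS := fun v hv => by simp [hv]
  normE := fun e he => by simp [he]
  memT := fun v hv => by simpa [hv] using g.memT _ (f.memT v hv)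
  memS := fun v hv => by simpa [hv] using g.memS _ (f.memS v hv)
  memE := fun e he => by simpa [he] using g.memE _ (f.memE e he)
  ell_comm := fun v hv => by
    simp only [hv, if_pos]
    rw [g.ell_comm _ (f.memT v hv), f.ell_comm v hv, Option.map_map]
    cases hcase : F.ell v with
    | none => simp
    | some e =>
      have he : e ∈ F.E := hF.ell_mem v hv e hcase
      simp [Function.comp, he]
  r_comm := fun v hv => by
    simp only [hv, if_pos]
    rw [g.r_comm _ (f.memS v hv), f.r_comm v hv, Option.map_map]
    cases hcase : F.r v with
    | none => simp
    | some e =>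
      have he : e ∈ F.E := hF.r_mem v hv e hcase
      simp [Function.comp, he]
  conn_comm := fun v hv => by
    simp only [hv, if_pos, hF.conn_mem v hv, if_pos]
    rw [f.conn_comm v hv, g.conn_comm _ (f.memT v hv)]
  lab_comm := fun e he => by
    simp only [he, if_pos]
    rw [g.lab_comm _ (f.memE e he), f.lab_comm e he]
  src_ord := fun e he => by
    simp only [he, if_pos]
    rw [g.src_ord _ (f.memE e he), f.src_ord e he, List.map_map]
    refine List.map_congr_left fun v hv => ?_
    have : v ∈ F.S := List.mem_of_mem_filter hv
    simp [this]
  tgt_ord := fun e he => by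
    simp only [he, if_pos]
    rw [g.tgt_ord _ (f.memE e he), f.tgt_ord e he, List.map_map]
    refine List.map_congr_left fun v hv => ?_
    have : v ∈ F.T := List.mem_of_mem_filter hv
    simp [this]

/-- The category `LHyp_Σ` of labelled linear hypergraphs over `Σ`. -/
instance LHypCat : Category (LHypObj Sg) where
  Hom F G := LHom F.1 G.1
  id F := LHom.idh F.1
  comp {F _ _} f g := LHom.comph F.2 f g
  id_comp {F G} f := by
    refine LHom.ext ?_ ?_ ?_ <;> funext x
    · by_cases h : x ∈ F.1.T
      · simp [LHom.comph, LHom.idh, h]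
      · simp only [LHom.comph, LHom.idh, if_neg h]
        exact (f.normT x h).symm
    · by_cases h : x ∈ F.1.S
      · simp [LHom.comph, LHom.idh, h]
      · simp only [LHom.comph, LHom.idh, if_neg h]
        exact (f.normS x h).symm
    · by_cases h : x ∈ F.1.E
      · simp [LHom.comph, LHom.idh, h]
      · simp only [LHom.comph, LHom.idh, if_neg h]
        exact (f.normE x h).symm
  comp_id {F G} f := by
    refine LHom.ext ?_ ?_ ?_ <;> funext x
    · by_cases h : x ∈ F.1.T
      · simp [LHom.comph, LHom.idh, h]
      · simp only [LHom.comph, LHom.idh, if_neg h]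
        exact (f.normT x h).symm
    · by_cases h : x ∈ F.1.S
      · simp [LHom.comph, LHom.idh, h]
      · simp only [LHom.comph, LHom.idh, if_neg h]
        exact (f.normS x h).symm
    · by_cases h : x ∈ F.1.E
      · simp [LHom.comph, LHom.idh, h]
      · simp only [LHom.comph, LHom.idh, if_neg h]
        exact (f.normE x h).symm
  assoc {F G H K} f g h := by
    refine LHom.ext ?_ ?_ ?_ <;> funext x
    · by_cases hx : x ∈ F.1.T
      · simp [LHom.comph, hx, f.memT x hx]
      · simp [LHom.comph, hx]
    · by_cases hx : x ∈ F.1.S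
      · simp [LHom.comph, hx, f.memS x hx]
      · simp [LHom.comph, hx]
    · by_cases hx : x ∈ F.1.E
      · simp [LHom.comph, hx, f.memE x hx]
      · simp [LHom.comph, hx]

end Paper

namespace Paper

open CategoryTheory LinHyp

variable {Sg : Sig}

structure IsHomOn (F G : LinHyp Sg) (fT fS fE : ℕ → ℕ) : Prop where
  memT : ∀ v ∈ F.T, fT v ∈ G.T
  memS : ∀ v ∈ F.S, fS v ∈ G.S
  memE : ∀ e ∈ F.E, fE e ∈ G.E
  ell_comm : ∀ v ∈ F.T, G.ell (fT v) = (F.ell v).map fE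
  r_comm : ∀ v ∈ F.S, G.r (fS v) = (F.r v).map fE
  conn_comm : ∀ v ∈ F.T, fS (F.conn v) = G.conn (fT v)
  lab_comm : ∀ e ∈ F.E, G.lab (fE e) = F.lab e
  src_ord : ∀ e ∈ F.E, G.sourcesOf (fE e) = (F.sourcesOf e).map fS
  tgt_ord : ∀ e ∈ F.E, G.targetsOf (fE e) = (F.targetsOf e).map fT

namespace IsHomOn

variable {F G : LinHyp Sg} {fT fS fE gT gS gE : ℕ → ℕ}

theorem congr (hF : F.WF) (h : IsHomOn F G fT fS fE) (hT : ∀ v ∈ F.T, fT v = gT v)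
    (hS : ∀ v ∈ F.S, fS v = gS v) (hE : ∀ e ∈ F.E, fE e = gE e) : IsHomOn F G gT gS gE where
  memT v hv := hT v hv ▸ h.memT v hv
  memS v hv := hS v hv ▸ h.memS v hv
  memE e he := hE e he ▸ h.memE e he
  ell_comm v hv := by
    rw [← hT v hv, h.ell_comm v hv]
    exact Option.map_congr fun e he => hE e (hF.ell_mem v hv e he)
  r_comm v hv := by
    rw [← hS v hv, h.r_comm v hv]
    exact Option.map_congr fun e he => hE e (hF.r_mem v hv e he)
  conn_comm v hv := by rw [← hS _ (hF.conn_mem v hv), ← hT v hv, h.conn_comm v hv]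
  lab_comm e he := by rw [← hE e he, h.lab_comm e he]
  src_ord e he := by
    rw [← hE e he, h.src_ord e he]
    exact List.map_congr_left fun v hv => hS v (List.mem_of_mem_filter hv)
  tgt_ord e he := by
    rw [← hE e he, h.tgt_ord e he]
    exact List.map_congr_left fun v hv => hT v (List.mem_of_mem_filter hv)

end IsHomOn

namespace LHom

variable {F G : LinHyp Sg}

def ofCarrier (hF : F.WF) {fT fS fE : ℕ → ℕ} (h : IsHomOn F G fT fS fE) : LHom F G :=
  have h' := h.congr hF (gT := fun v => if v ∈ F.T then fT v else v)
    (gS := fun v => if v ∈ F.S then fS v else v) (gE := fun e => if e ∈ F.E then fE e else e)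
    (fun _ hv => (if_pos hv).symm) (fun _ hv => (if_pos hv).symm) (fun _ he => (if_pos he).symm)
  { hT := fun v => if v ∈ F.T then fT v else v
    hS := fun v => if v ∈ F.S then fS v else v
    hE := fun e => if e ∈ F.E then fE e else e
    normT := fun _ hv => if_neg hv
    normS := fun _ hv => if_neg hv
    normE := fun _ he => if_neg he
    memT := h'.memT
    memS := h'.memS
    memE := h'.memE
    ell_comm := h'.ell_comm
    r_comm := h'.r_comm
    conn_comm := h'.conn_comm
    lab_comm := h'.lab_comm
    src_ord := h'.src_ord
    tgt_ord := h'.tgt_ord }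

section ofCarrier

variable (hF : F.WF) {fT fS fE : ℕ → ℕ} (h : IsHomOn F G fT fS fE)

theorem ofCarrier_hT {v : ℕ} (hv : v ∈ F.T) : (ofCarrier hF h).hT v = fT v := if_pos hv

theorem ofCarrier_hS {v : ℕ} (hv : v ∈ F.S) : (ofCarrier hF h).hS v = fS v := if_pos hv

theorem ofCarrier_hE {e : ℕ} (he : e ∈ F.E) : (ofCarrier hF h).hE e = fE e := if_pos he

end ofCarrier

theorem ext_on {f g : LHom F G} (hT : ∀ v ∈ F.T, f.hT v = g.hT v)
    (hS : ∀ v ∈ F.S, f.hS v = g.hS v) (hE : ∀ e ∈ F.E, f.hE e = g.hE e) : f = g := by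
  ext v
  · by_cases hv : v ∈ F.T
    · exact hT v hv
    · rw [f.normT v hv, g.normT v hv]
  · by_cases hv : v ∈ F.S
    · exact hS v hv
    · rw [f.normS v hv, g.normS v hv]
  · by_cases hv : v ∈ F.E
    · exact hE v hv
    · rw [f.normE v hv, g.normE v hv]

structure IsInjective (m : LHom F G) : Prop where
  injT : Set.InjOn m.hT {v | v ∈ F.T}
  injS : Set.InjOn m.hS {v | v ∈ F.S}
  injE : Set.InjOn m.hE {e | e ∈ F.E}

end LHom

section Comp

variable {F G H : LHypObj Sg} (a : F ⟶ G) (b : G ⟶ H)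

theorem comp_hT {v : ℕ} (hv : v ∈ F.1.T) : (a ≫ b).hT v = b.hT (a.hT v) := if_pos hv

theorem comp_hS {v : ℕ} (hv : v ∈ F.1.S) : (a ≫ b).hS v = b.hS (a.hS v) := if_pos hv

theorem comp_hE {e : ℕ} (he : e ∈ F.1.E) : (a ≫ b).hE e = b.hE (a.hE e) := if_pos he

end Comp

section KernelPair

theorem exists_eq_pair (x : ℕ) : ∃ u v, x = Nat.pair u v := ⟨_, _, (Nat.pair_unpair x).symm⟩

def pairsOf (A : List ℕ) (f : ℕ → ℕ) : List ℕ :=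
  A.flatMap fun u => (A.filter fun v => f v = f u).map (Nat.pair u)

@[simp]
theorem pair_mem_pairsOf {A : List ℕ} {f : ℕ → ℕ} {u v : ℕ} :
    Nat.pair u v ∈ pairsOf A f ↔ u ∈ A ∧ v ∈ A ∧ f v = f u := by
  simp [pairsOf, Nat.pair_eq_pair]

theorem nodup_pairsOf {A : List ℕ} (f : ℕ → ℕ) (hA : A.Nodup) : (pairsOf A f).Nodup := by
  refine List.nodup_flatMap.2 ⟨fun u _ => (hA.filter _).map fun a b h => ?_, hA.imp ?_⟩
  · exact (Nat.pair_eq_pair.1 h).2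
  · intro u u' hne x hx hx'
    obtain ⟨v, -, rfl⟩ := List.mem_map.1 hx
    obtain ⟨v', -, h⟩ := List.mem_map.1 hx'
    exact hne (Nat.pair_eq_pair.1 h).1.symm

theorem flatMap_fibre_eq_zipWith (f : ℕ → ℕ) :
    ∀ {a b : List ℕ}, a.map f = b.map f → (b.map f).Nodup →
      (a.flatMap fun u => (b.filter fun v => f v = f u).map (Nat.pair u)) =
        List.zipWith Nat.pair a b
  | [], [], _, _ => rfl
  | [], _ :: _, h, _ | _ :: _, [], h, _ => by simp at h
  | x :: a, y :: b, h, hnd => by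
    simp only [List.map_cons, List.cons.injEq] at h
    obtain ⟨hxy, htl⟩ := h
    rw [List.map_cons, List.nodup_cons] at hnd
    have hy : ∀ u ∈ a, f y ≠ f u := fun u hu hyu =>
      hnd.1 (hyu ▸ htl ▸ List.mem_map_of_mem hu)
    have hx : (b.filter fun v => f v = f x) = [] :=
      List.filter_eq_nil_iff.2 fun v hv hfv => hnd.1 (by
        rw [← hxy, ← of_decide_eq_true hfv]; exact List.mem_map_of_mem hv)
    rw [List.flatMap_cons, List.filter_cons_of_pos (by simp [hxy]), hx,
      List.flatMap_congr fun u hu => by rw [List.filter_cons_of_neg (by simpa using hy u hu)],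
      flatMap_fibre_eq_zipWith f htl hnd.2]
    rfl

theorem map₂_pair_eq_some_pair {o₁ o₂ : Option ℕ} {a b : ℕ} :
    Option.map₂ Nat.pair o₁ o₂ = some (Nat.pair a b) ↔ o₁ = some a ∧ o₂ = some b := by
  cases o₁ <;> cases o₂ <;> simp [Nat.pair_eq_pair]

theorem filter_pairsOf_eq_zipWith {A : List ℕ} {f : ℕ → ℕ} {ρ : ℕ → Option ℕ} {e₁ e₂ : ℕ}
    (hmap : (A.filter (ρ · = some e₁)).map f = (A.filter (ρ · = some e₂)).map f)
    (hnd : ((A.filter (ρ · = some e₂)).map f).Nodup) :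
    (pairsOf A f).filter (fun x =>
        Option.map₂ Nat.pair (ρ x.unpair.1) (ρ x.unpair.2) = some (Nat.pair e₁ e₂)) =
      List.zipWith Nat.pair (A.filter (ρ · = some e₁)) (A.filter (ρ · = some e₂)) := by
  rw [← flatMap_fibre_eq_zipWith f hmap hnd, pairsOf, List.filter_flatMap]
  suffices ∀ B : List ℕ,
      (B.flatMap fun u => ((A.filter fun v => f v = f u).map (Nat.pair u)).filter fun x =>
        Option.map₂ Nat.pair (ρ x.unpair.1) (ρ x.unpair.2) = some (Nat.pair e₁ e₂)) =
      (B.filter (ρ · = some e₁)).flatMap fun u =>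
        ((A.filter (ρ · = some e₂)).filter fun v => f v = f u).map (Nat.pair u) from this A
  intro B
  induction B with
  | nil => rfl
  | cons u B ih =>
    rw [List.flatMap_cons, ih, List.filter_map, List.filter_cons]
    by_cases hu : ρ u = some e₁
    · simp only [hu, decide_true, if_true, List.flatMap_cons, List.filter_filter]
      congr 2
      exact List.filter_congr fun v _ => by simp [hu, Bool.and_comm]
    · simp only [hu, decide_false, if_false, Bool.false_eq_true]
      rw [List.filter_eq_nil_iff.2 fun v _ => by simp [hu]]
      rfl

def pairProj (b : Bool) (p : ℕ) : ℕ := cond b p.unpair.1 p.unpair.2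

@[simp]
theorem pairProj_pair (b : Bool) (u v : ℕ) : pairProj b (Nat.pair u v) = cond b u v := by
  simp [pairProj]

theorem map_pairProj_zipWith (b : Bool) :
    ∀ {l₁ l₂ : List ℕ}, l₁.length = l₂.length →
      (List.zipWith Nat.pair l₁ l₂).map (pairProj b) = cond b l₁ l₂
  | [], [], _ => by cases b <;> rfl
  | [], _ :: _, h | _ :: _, [], h => by simp at h
  | a :: l₁, c :: l₂, h => by
    rw [List.zipWith_cons_cons, List.map_cons, map_pairProj_zipWith b (by simpa using h),
      pairProj_pair]
    cases b <;> rfl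

variable {L G : LinHyp Sg}

/-- The kernel pair `L ×_G L` of `m`, with pairs of atoms coded by `Nat.pair`. -/
noncomputable def kernelPair (m : LHom L G) : LinHyp Sg where
  T := pairsOf L.T m.hT
  S := pairsOf L.S m.hS
  E := (pairsOf L.E.toList m.hE).toFinset
  ell p := Option.map₂ Nat.pair (L.ell p.unpair.1) (L.ell p.unpair.2)
  r p := Option.map₂ Nat.pair (L.r p.unpair.1) (L.r p.unpair.2)
  conn p := Nat.pair (L.conn p.unpair.1) (L.conn p.unpair.2)
  lab e := L.lab e.unpair.1

namespace kernelPair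

variable (m : LHom L G) {u v : ℕ}

@[simp]
theorem pair_mem_T :
    Nat.pair u v ∈ (kernelPair m).T ↔ u ∈ L.T ∧ v ∈ L.T ∧ m.hT v = m.hT u :=
  pair_mem_pairsOf

@[simp]
theorem pair_mem_S :
    Nat.pair u v ∈ (kernelPair m).S ↔ u ∈ L.S ∧ v ∈ L.S ∧ m.hS v = m.hS u :=
  pair_mem_pairsOf

@[simp]
theorem pair_mem_E :
    Nat.pair u v ∈ (kernelPair m).E ↔ u ∈ L.E ∧ v ∈ L.E ∧ m.hE v = m.hE u := by
  simp [kernelPair]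

@[simp]
theorem ell_pair :
    (kernelPair m).ell (Nat.pair u v) = Option.map₂ Nat.pair (L.ell u) (L.ell v) := by
  simp [kernelPair]

@[simp]
theorem r_pair : (kernelPair m).r (Nat.pair u v) = Option.map₂ Nat.pair (L.r u) (L.r v) := by
  simp [kernelPair]

@[simp]
theorem conn_pair : (kernelPair m).conn (Nat.pair u v) = Nat.pair (L.conn u) (L.conn v) := by
  simp [kernelPair]

@[simp]
theorem lab_pair : (kernelPair m).lab (Nat.pair u v) = L.lab u := by
  simp [kernelPair]

variable {m}

theorem map_ell_eq (hu : u ∈ L.T) (hv : v ∈ L.T) (h : m.hT v = m.hT u) :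
    (L.ell v).map m.hE = (L.ell u).map m.hE := by
  rw [← m.ell_comm u hu, ← m.ell_comm v hv, h]

theorem map_r_eq (hu : u ∈ L.S) (hv : v ∈ L.S) (h : m.hS v = m.hS u) :
    (L.r v).map m.hE = (L.r u).map m.hE := by
  rw [← m.r_comm u hu, ← m.r_comm v hv, h]

theorem lab_eq (hu : u ∈ L.E) (hv : v ∈ L.E) (h : m.hE v = m.hE u) : L.lab v = L.lab u := by
  rw [← m.lab_comm u hu, ← m.lab_comm v hv, h]

theorem map_sourcesOf_eq (hu : u ∈ L.E) (hv : v ∈ L.E) (h : m.hE v = m.hE u) :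
    (L.sourcesOf u).map m.hS = (L.sourcesOf v).map m.hS := by
  rw [← m.src_ord u hu, ← m.src_ord v hv, h]

theorem map_targetsOf_eq (hu : u ∈ L.E) (hv : v ∈ L.E) (h : m.hE v = m.hE u) :
    (L.targetsOf u).map m.hT = (L.targetsOf v).map m.hT := by
  rw [← m.tgt_ord u hu, ← m.tgt_ord v hv, h]

theorem sourcesOf_pair (hG : G.WF) (hu : u ∈ L.E) (hv : v ∈ L.E) (h : m.hE v = m.hE u) :
    (kernelPair m).sourcesOf (Nat.pair u v) =
      List.zipWith Nat.pair (L.sourcesOf u) (L.sourcesOf v) :=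
  filter_pairsOf_eq_zipWith (map_sourcesOf_eq hu hv h)
    (m.src_ord v hv ▸ hG.nodupS.filter _)

theorem targetsOf_pair (hG : G.WF) (hu : u ∈ L.E) (hv : v ∈ L.E) (h : m.hE v = m.hE u) :
    (kernelPair m).targetsOf (Nat.pair u v) =
      List.zipWith Nat.pair (L.targetsOf u) (L.targetsOf v) :=
  filter_pairsOf_eq_zipWith (map_targetsOf_eq hu hv h)
    (m.tgt_ord v hv ▸ hG.nodupT.filter _)

theorem wf (hL : L.WF) (hG : G.WF) : (kernelPair m).WF where
  nodupT := nodup_pairsOf _ hL.nodupT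
  nodupS := nodup_pairsOf _ hL.nodupS
  disjTS p hp hp' := by
    obtain ⟨u, v, rfl⟩ := exists_eq_pair p
    exact hL.disjTS u ((pair_mem_T m).1 hp).1 ((pair_mem_S m).1 hp').1
  ell_mem p hp e he := by
    obtain ⟨u, v, rfl⟩ := exists_eq_pair p
    obtain ⟨a, b, rfl⟩ := exists_eq_pair e
    obtain ⟨hu, hv, h⟩ := (pair_mem_T m).1 hp
    obtain ⟨ha, hb⟩ := map₂_pair_eq_some_pair.1 ((ell_pair m).symm.trans he)
    have hab := map_ell_eq hu hv h
    rw [ha, hb] at hab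
    exact (pair_mem_E m).2 ⟨hL.ell_mem u hu a ha, hL.ell_mem v hv b hb, by simpa using hab⟩
  r_mem p hp e he := by
    obtain ⟨u, v, rfl⟩ := exists_eq_pair p
    obtain ⟨a, b, rfl⟩ := exists_eq_pair e
    obtain ⟨hu, hv, h⟩ := (pair_mem_S m).1 hp
    obtain ⟨ha, hb⟩ := map₂_pair_eq_some_pair.1 ((r_pair m).symm.trans he)
    have hab := map_r_eq hu hv h
    rw [ha, hb] at hab
    exact (pair_mem_E m).2 ⟨hL.r_mem u hu a ha, hL.r_mem v hv b hb, by simpa using hab⟩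
  conn_mem p hp := by
    obtain ⟨u, v, rfl⟩ := exists_eq_pair p
    obtain ⟨hu, hv, h⟩ := (pair_mem_T m).1 hp
    rw [conn_pair, pair_mem_S, m.conn_comm u hu, m.conn_comm v hv, h]
    exact ⟨hL.conn_mem u hu, hL.conn_mem v hv, rfl⟩
  conn_inj p hp p' hp' h := by
    obtain ⟨u, v, rfl⟩ := exists_eq_pair p
    obtain ⟨u', v', rfl⟩ := exists_eq_pair p'
    obtain ⟨hu, hv, -⟩ := (pair_mem_T m).1 hp
    obtain ⟨hu', hv', -⟩ := (pair_mem_T m).1 hp'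
    rw [conn_pair, conn_pair, Nat.pair_eq_pair] at h
    rw [hL.conn_inj u hu u' hu' h.1, hL.conn_inj v hv v' hv' h.2]
  conn_surj w hw := by
    obtain ⟨s, s', rfl⟩ := exists_eq_pair w
    obtain ⟨hs, hs', h⟩ := (pair_mem_S m).1 hw
    obtain ⟨u, hu, rfl⟩ := hL.conn_surj s hs
    obtain ⟨u', hu', rfl⟩ := hL.conn_surj s' hs'
    refine ⟨Nat.pair u u', (pair_mem_T m).2 ⟨hu, hu', ?_⟩, conn_pair m⟩
    refine hG.conn_inj _ (m.memT u' hu') _ (m.memT u hu) ?_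
    rw [← m.conn_comm u hu, ← m.conn_comm u' hu', h]
  lab_some e he := by
    obtain ⟨a, b, rfl⟩ := exists_eq_pair e
    rw [lab_pair]
    exact hL.lab_some a ((pair_mem_E m).1 he).1
  arity_src e he l hl := by
    obtain ⟨a, b, rfl⟩ := exists_eq_pair e
    obtain ⟨ha, hb, h⟩ := (pair_mem_E m).1 he
    rw [lab_pair] at hl
    rw [sourcesOf_pair hG ha hb h, List.length_zipWith, hL.arity_src a ha l hl,
      hL.arity_src b hb l ((lab_eq ha hb h).trans hl), min_self]
  arity_tgt e he l hl := by
    obtain ⟨a, b, rfl⟩ := exists_eq_pair e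
    obtain ⟨ha, hb, h⟩ := (pair_mem_E m).1 he
    rw [lab_pair] at hl
    rw [targetsOf_pair hG ha hb h, List.length_zipWith, hL.arity_tgt a ha l hl,
      hL.arity_tgt b hb l ((lab_eq ha hb h).trans hl), min_self]

theorem isHomOn_pairProj (hG : G.WF) (b : Bool) :
    IsHomOn (kernelPair m) L (pairProj b) (pairProj b) (pairProj b) where
  memT p hp := by
    obtain ⟨u, v, rfl⟩ := exists_eq_pair p
    obtain ⟨hu, hv, -⟩ := (pair_mem_T m).1 hp
    cases b <;> simpa
  memS p hp := by
    obtain ⟨u, v, rfl⟩ := exists_eq_pair p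
    obtain ⟨hu, hv, -⟩ := (pair_mem_S m).1 hp
    cases b <;> simpa
  memE e he := by
    obtain ⟨a, c, rfl⟩ := exists_eq_pair e
    obtain ⟨ha, hc, -⟩ := (pair_mem_E m).1 he
    cases b <;> simpa
  ell_comm p hp := by
    obtain ⟨u, v, rfl⟩ := exists_eq_pair p
    obtain ⟨hu, hv, h⟩ := (pair_mem_T m).1 hp
    have hfib := map_ell_eq hu hv h
    rw [pairProj_pair, ell_pair]
    cases hu' : L.ell u <;> cases hv' : L.ell v <;> rw [hu', hv'] at hfib <;>
      cases b <;> simp_all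
  r_comm p hp := by
    obtain ⟨u, v, rfl⟩ := exists_eq_pair p
    obtain ⟨hu, hv, h⟩ := (pair_mem_S m).1 hp
    have hfib := map_r_eq hu hv h
    rw [pairProj_pair, r_pair]
    cases hu' : L.r u <;> cases hv' : L.r v <;> rw [hu', hv'] at hfib <;>
      cases b <;> simp_all
  conn_comm p _ := by
    obtain ⟨u, v, rfl⟩ := exists_eq_pair p
    cases b <;> simp
  lab_comm e he := by
    obtain ⟨a, c, rfl⟩ := exists_eq_pair e
    obtain ⟨ha, hc, h⟩ := (pair_mem_E m).1 he
    rw [pairProj_pair, lab_pair]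
    cases b
    · exact lab_eq ha hc h
    · rfl
  src_ord e he := by
    obtain ⟨a, c, rfl⟩ := exists_eq_pair e
    obtain ⟨ha, hc, h⟩ := (pair_mem_E m).1 he
    rw [sourcesOf_pair hG ha hc h, map_pairProj_zipWith b
      (by simpa using congrArg List.length (map_sourcesOf_eq ha hc h)), pairProj_pair]
    cases b <;> rfl
  tgt_ord e he := by
    obtain ⟨a, c, rfl⟩ := exists_eq_pair e
    obtain ⟨ha, hc, h⟩ := (pair_mem_E m).1 he
    rw [targetsOf_pair hG ha hc h, map_pairProj_zipWith b
      (by simpa using congrArg List.length (map_targetsOf_eq ha hc h)), pairProj_pair]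
    cases b <;> rfl

end kernelPair

theorem LHom.isInjective_of_mono {L G : LHypObj Sg} (m : L ⟶ G) [Mono m] :
    LHom.IsInjective m := by
  let P : LHypObj Sg := ⟨kernelPair m, kernelPair.wf L.2 G.2⟩
  let π (b : Bool) : P ⟶ L := LHom.ofCarrier P.2 (kernelPair.isHomOn_pairProj G.2 b)
  have hπ : π true = π false := by
    refine Mono.right_cancellation (f := m) _ _ (LHom.ext_on ?_ ?_ ?_) <;> intro p hp <;>
      obtain ⟨u, v, rfl⟩ := exists_eq_pair p
    · simpa [π, comp_hT _ _ hp, LHom.ofCarrier_hT _ _ hp] using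
        ((kernelPair.pair_mem_T m).1 hp).2.2.symm
    · simpa [π, comp_hS _ _ hp, LHom.ofCarrier_hS _ _ hp] using
        ((kernelPair.pair_mem_S m).1 hp).2.2.symm
    · simpa [π, comp_hE _ _ hp, LHom.ofCarrier_hE _ _ hp] using
        ((kernelPair.pair_mem_E m).1 hp).2.2.symm
  refine ⟨fun u hu v hv h => ?_, fun u hu v hv h => ?_, fun u hu v hv h => ?_⟩
  · have hp : Nat.pair u v ∈ P.1.T := (kernelPair.pair_mem_T m).2 ⟨hu, hv, h.symm⟩
    simpa [π, LHom.ofCarrier_hT _ _ hp] using congrArg (fun f => LHom.hT f (Nat.pair u v)) hπ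
  · have hp : Nat.pair u v ∈ P.1.S := (kernelPair.pair_mem_S m).2 ⟨hu, hv, h.symm⟩
    simpa [π, LHom.ofCarrier_hS _ _ hp] using congrArg (fun f => LHom.hS f (Nat.pair u v)) hπ
  · have hp : Nat.pair u v ∈ P.1.E := (kernelPair.pair_mem_E m).2 ⟨hu, hv, h.symm⟩
    simpa [π, LHom.ofCarrier_hE _ _ hp] using congrArg (fun f => LHom.hE f (Nat.pair u v)) hπ

end KernelPair

section Complement

variable {K L G : LinHyp Sg}

namespace LHom

variable (m : LHom L G) {u v e : ℕ}

theorem mem_image_of_ell_eq (hL : L.WF) (hu : u ∈ L.T) (h : G.ell (m.hT u) = some e) :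
    e ∈ L.E.image m.hE := by
  rw [m.ell_comm u hu, Option.map_eq_some_iff] at h
  obtain ⟨a, ha, rfl⟩ := h
  exact Finset.mem_image_of_mem _ (hL.ell_mem u hu a ha)

theorem mem_image_of_r_eq (hL : L.WF) (hu : u ∈ L.S) (h : G.r (m.hS u) = some e) :
    e ∈ L.E.image m.hE := by
  rw [m.r_comm u hu, Option.map_eq_some_iff] at h
  obtain ⟨a, ha, rfl⟩ := h
  exact Finset.mem_image_of_mem _ (hL.r_mem u hu a ha)

theorem mem_map_of_ell_eq (he : e ∈ L.E) (hv : v ∈ G.T) (h : G.ell v = some (m.hE e)) :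
    v ∈ L.T.map m.hT := by
  have hv' : v ∈ G.targetsOf (m.hE e) := List.mem_filter.2 ⟨hv, by simpa using h⟩
  rw [m.tgt_ord e he] at hv'
  obtain ⟨u, hu, rfl⟩ := List.mem_map.1 hv'
  exact List.mem_map_of_mem (List.mem_of_mem_filter hu)

theorem mem_map_of_r_eq (he : e ∈ L.E) (hv : v ∈ G.S) (h : G.r v = some (m.hE e)) :
    v ∈ L.S.map m.hS := by
  have hv' : v ∈ G.sourcesOf (m.hE e) := List.mem_filter.2 ⟨hv, by simpa using h⟩
  rw [m.src_ord e he] at hv'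
  obtain ⟨u, hu, rfl⟩ := List.mem_map.1 hv'
  exact List.mem_map_of_mem (List.mem_of_mem_filter hu)

theorem conn_mem_map_iff (hL : L.WF) (hG : G.WF) (hv : v ∈ G.T) :
    G.conn v ∈ L.S.map m.hS ↔ v ∈ L.T.map m.hT := by
  constructor
  · intro hw
    obtain ⟨w, hw, hwv⟩ := List.mem_map.1 hw
    obtain ⟨u, hu, rfl⟩ := hL.conn_surj w hw
    refine List.mem_map.2 ⟨u, hu, hG.conn_inj _ (m.memT u hu) _ hv ?_⟩
    rw [← m.conn_comm u hu, hwv]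
  · intro hvm
    obtain ⟨u, hu, rfl⟩ := List.mem_map.1 hvm
    exact List.mem_map.2 ⟨_, hL.conn_mem u hu, m.conn_comm u hu⟩

end LHom

theorem LinHyp.WF.ell_eq_none (hK : K.WF) (hKE : K.E = ∅) {t : ℕ} (ht : t ∈ K.T) :
    K.ell t = none :=
  Option.eq_none_iff_forall_ne_some.2 fun e he => by simpa [hKE] using hK.ell_mem t ht e he

theorem LinHyp.WF.r_eq_none (hK : K.WF) (hKE : K.E = ∅) {t : ℕ} (ht : t ∈ K.S) :
    K.r t = none :=
  Option.eq_none_iff_forall_ne_some.2 fun e he => by simpa [hKE] using hK.r_mem t ht e he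

variable (i : LHom K G) (m : LHom L G)

def complement : LinHyp Sg where
  T := G.T.filter fun v => v ∈ K.T.map i.hT ∨ v ∉ L.T.map m.hT
  S := G.S.filter fun v => v ∈ K.S.map i.hS ∨ v ∉ L.S.map m.hS
  E := G.E.filter fun e => e ∉ L.E.image m.hE
  ell := G.ell
  r := G.r
  conn := G.conn
  lab := G.lab

namespace complement

variable {i m} {v e : ℕ}

@[simp]
theorem mem_T :
    v ∈ (complement i m).T ↔ v ∈ G.T ∧ (v ∈ K.T.map i.hT ∨ v ∉ L.T.map m.hT) := by
  simp [complement]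

@[simp]
theorem mem_S :
    v ∈ (complement i m).S ↔ v ∈ G.S ∧ (v ∈ K.S.map i.hS ∨ v ∉ L.S.map m.hS) := by
  simp [complement]

@[simp]
theorem mem_E : e ∈ (complement i m).E ↔ e ∈ G.E ∧ e ∉ L.E.image m.hE := by
  simp [complement]

theorem conn_mem_S_iff (hK : K.WF) (hL : L.WF) (hG : G.WF) (hv : v ∈ G.T) :
    G.conn v ∈ (complement i m).S ↔ v ∈ (complement i m).T := by
  simp [hv, hG.conn_mem v hv, i.conn_mem_map_iff hK hG hv, m.conn_mem_map_iff hL hG hv]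

theorem sourcesOf_eq (hL : L.WF) (he : e ∈ (complement i m).E) :
    (complement i m).sourcesOf e = G.sourcesOf e := by
  simp only [sourcesOf, complement, List.filter_filter]
  refine List.filter_congr fun v _ => ?_
  by_cases hr : G.r v = some e
  · have : v ∉ L.S.map m.hS := fun hv => by
      obtain ⟨u, hu, rfl⟩ := List.mem_map.1 hv
      exact (mem_E.1 he).2 (m.mem_image_of_r_eq hL hu hr)
    simp [hr, this]
  · simp [hr]

theorem targetsOf_eq (hL : L.WF) (he : e ∈ (complement i m).E) :
    (complement i m).targetsOf e = G.targetsOf e := by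
  simp only [targetsOf, complement, List.filter_filter]
  refine List.filter_congr fun v _ => ?_
  by_cases hr : G.ell v = some e
  · have : v ∉ L.T.map m.hT := fun hv => by
      obtain ⟨u, hu, rfl⟩ := List.mem_map.1 hv
      exact (mem_E.1 he).2 (m.mem_image_of_ell_eq hL hu hr)
    simp [hr, this]
  · simp [hr]

theorem wf (hK : K.WF) (hL : L.WF) (hG : G.WF) (hKE : K.E = ∅) : (complement i m).WF where
  nodupT := hG.nodupT.filter _
  nodupS := hG.nodupS.filter _
  disjTS v hv hv' := hG.disjTS v (mem_T.1 hv).1 (mem_S.1 hv').1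
  ell_mem v hv e he := by
    change G.ell v = some e at he
    obtain ⟨hvG, hvK | hvL⟩ := mem_T.1 hv
    · obtain ⟨t, ht, rfl⟩ := List.mem_map.1 hvK
      simp [i.ell_comm t ht, hK.ell_eq_none hKE ht] at he
    · refine mem_E.2 ⟨hG.ell_mem v hvG e he, fun he' => hvL ?_⟩
      obtain ⟨a, ha, rfl⟩ := Finset.mem_image.1 he'
      exact m.mem_map_of_ell_eq ha hvG he
  r_mem v hv e he := by
    change G.r v = some e at he
    obtain ⟨hvG, hvK | hvL⟩ := mem_S.1 hv
    · obtain ⟨t, ht, rfl⟩ := List.mem_map.1 hvK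
      simp [i.r_comm t ht, hK.r_eq_none hKE ht] at he
    · refine mem_E.2 ⟨hG.r_mem v hvG e he, fun he' => hvL ?_⟩
      obtain ⟨a, ha, rfl⟩ := Finset.mem_image.1 he'
      exact m.mem_map_of_r_eq ha hvG he
  conn_mem v hv := (conn_mem_S_iff hK hL hG (mem_T.1 hv).1).2 hv
  conn_inj v hv w hw := hG.conn_inj v (mem_T.1 hv).1 w (mem_T.1 hw).1
  conn_surj w hw := by
    obtain ⟨v, hv, rfl⟩ := hG.conn_surj w (mem_S.1 hw).1
    exact ⟨v, (conn_mem_S_iff hK hL hG hv).1 hw, rfl⟩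
  lab_some e he := hG.lab_some e (mem_E.1 he).1
  arity_src e he := by
    rw [sourcesOf_eq hL he]
    exact hG.arity_src e (mem_E.1 he).1
  arity_tgt e he := by
    rw [targetsOf_eq hL he]
    exact hG.arity_tgt e (mem_E.1 he).1

theorem isHomOn_incl (hL : L.WF) : IsHomOn (complement i m) G id id id where
  memT v hv := (mem_T.1 hv).1
  memS v hv := (mem_S.1 hv).1
  memE e he := (mem_E.1 he).1
  ell_comm _ _ := Option.map_id'.symm
  r_comm _ _ := Option.map_id'.symm
  conn_comm _ _ := rfl
  lab_comm _ _ := rfl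
  src_ord e he := by rw [List.map_id, sourcesOf_eq hL he]; rfl
  tgt_ord e he := by rw [List.map_id, targetsOf_eq hL he]; rfl

theorem isHomOn_corestrict (hKE : K.E = ∅) : IsHomOn K (complement i m) i.hT i.hS i.hE where
  memT t ht := mem_T.2 ⟨i.memT t ht, Or.inl (List.mem_map_of_mem ht)⟩
  memS t ht := mem_S.2 ⟨i.memS t ht, Or.inl (List.mem_map_of_mem ht)⟩
  memE e he := by simp [hKE] at he
  ell_comm := i.ell_comm
  r_comm := i.r_comm
  conn_comm := i.conn_comm
  lab_comm e he := by simp [hKE] at he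
  src_ord e he := by simp [hKE] at he
  tgt_ord e he := by simp [hKE] at he

end complement

end Complement

section Gluing

variable {L C G W : LinHyp Sg}

structure JointlySurjective (m : LHom L G) (c : LHom C G) : Prop where
  T : ∀ v ∈ G.T, (∃ a ∈ L.T, m.hT a = v) ∨ ∃ b ∈ C.T, c.hT b = v
  S : ∀ v ∈ G.S, (∃ a ∈ L.S, m.hS a = v) ∨ ∃ b ∈ C.S, c.hS b = v
  E : ∀ e ∈ G.E, (∃ a ∈ L.E, m.hE a = e) ∨ ∃ b ∈ C.E, c.hE b = e

structure CompEqOn (m : LHom L G) (φT φS φE : ℕ → ℕ) (f : LHom L W) : Prop where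
  T : ∀ a ∈ L.T, φT (m.hT a) = f.hT a
  S : ∀ a ∈ L.S, φS (m.hS a) = f.hS a
  E : ∀ a ∈ L.E, φE (m.hE a) = f.hE a

namespace CompEqOn

variable {m : LHom L G} {f : LHom L W} {φT φS φE : ℕ → ℕ} {a : ℕ}

theorem memT (hf : CompEqOn m φT φS φE f) (ha : a ∈ L.T) : φT (m.hT a) ∈ W.T :=
  hf.T a ha ▸ f.memT a ha

theorem memS (hf : CompEqOn m φT φS φE f) (ha : a ∈ L.S) : φS (m.hS a) ∈ W.S :=
  hf.S a ha ▸ f.memS a ha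

theorem memE (hf : CompEqOn m φT φS φE f) (ha : a ∈ L.E) : φE (m.hE a) ∈ W.E :=
  hf.E a ha ▸ f.memE a ha

theorem ell_comm (hf : CompEqOn m φT φS φE f) (hL : L.WF) (ha : a ∈ L.T) :
    W.ell (φT (m.hT a)) = (G.ell (m.hT a)).map φE := by
  rw [hf.T a ha, f.ell_comm a ha, m.ell_comm a ha, Option.map_map]
  exact Option.map_congr fun e he => (hf.E e (hL.ell_mem a ha e he)).symm

theorem r_comm (hf : CompEqOn m φT φS φE f) (hL : L.WF) (ha : a ∈ L.S) :
    W.r (φS (m.hS a)) = (G.r (m.hS a)).map φE := by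
  rw [hf.S a ha, f.r_comm a ha, m.r_comm a ha, Option.map_map]
  exact Option.map_congr fun e he => (hf.E e (hL.r_mem a ha e he)).symm

theorem conn_comm (hf : CompEqOn m φT φS φE f) (hL : L.WF) (ha : a ∈ L.T) :
    φS (G.conn (m.hT a)) = W.conn (φT (m.hT a)) := by
  rw [← m.conn_comm a ha, hf.S _ (hL.conn_mem a ha), hf.T a ha, f.conn_comm a ha]

theorem lab_comm (hf : CompEqOn m φT φS φE f) (ha : a ∈ L.E) :
    W.lab (φE (m.hE a)) = G.lab (m.hE a) := by
  rw [hf.E a ha, f.lab_comm a ha, m.lab_comm a ha]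

theorem src_ord (hf : CompEqOn m φT φS φE f) (ha : a ∈ L.E) :
    W.sourcesOf (φE (m.hE a)) = (G.sourcesOf (m.hE a)).map φS := by
  rw [hf.E a ha, f.src_ord a ha, m.src_ord a ha, List.map_map]
  exact List.map_congr_left fun v hv => (hf.S v (List.mem_of_mem_filter hv)).symm

theorem tgt_ord (hf : CompEqOn m φT φS φE f) (ha : a ∈ L.E) :
    W.targetsOf (φE (m.hE a)) = (G.targetsOf (m.hE a)).map φT := by
  rw [hf.E a ha, f.tgt_ord a ha, m.tgt_ord a ha, List.map_map]
  exact List.map_congr_left fun v hv => (hf.T v (List.mem_of_mem_filter hv)).symm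

end CompEqOn

theorem IsHomOn.of_jointlySurjective (hL : L.WF) (hC : C.WF) {m : LHom L G} {c : LHom C G}
    (hmc : JointlySurjective m c) {f : LHom L W} {g : LHom C W} {φT φS φE : ℕ → ℕ}
    (hf : CompEqOn m φT φS φE f) (hg : CompEqOn c φT φS φE g) : IsHomOn G W φT φS φE where
  memT v hv := by
    rcases hmc.T v hv with ⟨a, ha, rfl⟩ | ⟨a, ha, rfl⟩
    exacts [hf.memT ha, hg.memT ha]
  memS v hv := by
    rcases hmc.S v hv with ⟨a, ha, rfl⟩ | ⟨a, ha, rfl⟩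
    exacts [hf.memS ha, hg.memS ha]
  memE e he := by
    rcases hmc.E e he with ⟨a, ha, rfl⟩ | ⟨a, ha, rfl⟩
    exacts [hf.memE ha, hg.memE ha]
  ell_comm v hv := by
    rcases hmc.T v hv with ⟨a, ha, rfl⟩ | ⟨a, ha, rfl⟩
    exacts [hf.ell_comm hL ha, hg.ell_comm hC ha]
  r_comm v hv := by
    rcases hmc.S v hv with ⟨a, ha, rfl⟩ | ⟨a, ha, rfl⟩
    exacts [hf.r_comm hL ha, hg.r_comm hC ha]
  conn_comm v hv := by
    rcases hmc.T v hv with ⟨a, ha, rfl⟩ | ⟨a, ha, rfl⟩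
    exacts [hf.conn_comm hL ha, hg.conn_comm hC ha]
  lab_comm e he := by
    rcases hmc.E e he with ⟨a, ha, rfl⟩ | ⟨a, ha, rfl⟩
    exacts [hf.lab_comm ha, hg.lab_comm ha]
  src_ord e he := by
    rcases hmc.E e he with ⟨a, ha, rfl⟩ | ⟨a, ha, rfl⟩
    exacts [hf.src_ord ha, hg.src_ord ha]
  tgt_ord e he := by
    rcases hmc.E e he with ⟨a, ha, rfl⟩ | ⟨a, ha, rfl⟩
    exacts [hf.tgt_ord ha, hg.tgt_ord ha]

end Gluing

section ExtendOn

variable {α : Type*} [Membership ℕ α] {A : α} {h φ ψ : ℕ → ℕ}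

noncomputable def extendOn (A : α) (h φ ψ : ℕ → ℕ) : ℕ → ℕ :=
  Function.extend (fun a : {a // a ∈ A} => h a) (fun a => φ a) ψ

theorem extendOn_apply (hinj : Set.InjOn h {a | a ∈ A}) {a : ℕ} (ha : a ∈ A) :
    extendOn A h φ ψ (h a) = φ a :=
  Function.Injective.extend_apply (f := fun a : {a // a ∈ A} => h a) hinj.injective _ _
    ⟨a, ha⟩

theorem extendOn_of_forall_ne {v : ℕ} (hv : ∀ a ∈ A, h a ≠ v) :
    extendOn A h φ ψ v = ψ v :=
  Function.extend_apply' _ _ _ fun ⟨⟨a, ha⟩, hav⟩ => hv a ha hav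

theorem LHom.IsInjective.compEqOn_extendOn {L G W : LinHyp Sg} {m : LHom L G} (hm : m.IsInjective)
    (f : LHom L W) (ψT ψS ψE : ℕ → ℕ) :
    CompEqOn m (extendOn L.T m.hT f.hT ψT) (extendOn L.S m.hS f.hS ψS)
      (extendOn L.E m.hE f.hE ψE) f :=
  ⟨fun _ ha => extendOn_apply hm.injT ha, fun _ ha => extendOn_apply hm.injS ha,
    fun _ ha => extendOn_apply hm.injE ha⟩

end ExtendOn

section Pushout

theorem comp_ofCarrier_eq {F G W : LHypObj Sg} (m : F ⟶ G) {φT φS φE : ℕ → ℕ}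
    (h : IsHomOn G.1 W.1 φT φS φE) {f : F ⟶ W} (hf : CompEqOn m φT φS φE f) :
    m ≫ LHom.ofCarrier G.2 h = f :=
  LHom.ext_on
    (fun v hv => by rw [comp_hT _ _ hv, LHom.ofCarrier_hT _ _ (m.memT v hv), hf.T v hv])
    (fun v hv => by rw [comp_hS _ _ hv, LHom.ofCarrier_hS _ _ (m.memS v hv), hf.S v hv])
    (fun e he => by rw [comp_hE _ _ he, LHom.ofCarrier_hE _ _ (m.memE e he), hf.E e he])

theorem JointlySurjective.ext {L C G W : LHypObj Sg} {m : L ⟶ G} {c : C ⟶ G}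
    (hmc : JointlySurjective m c) {h₁ h₂ : G ⟶ W} (hm : m ≫ h₁ = m ≫ h₂)
    (hc : c ≫ h₁ = c ≫ h₂) : h₁ = h₂ := by
  refine LHom.ext_on (fun v hv => ?_) (fun v hv => ?_) (fun e he => ?_)
  · rcases hmc.T v hv with ⟨a, ha, rfl⟩ | ⟨a, ha, rfl⟩
    · simpa [comp_hT _ _ ha] using congrArg (fun f => LHom.hT f a) hm
    · simpa [comp_hT _ _ ha] using congrArg (fun f => LHom.hT f a) hc
  · rcases hmc.S v hv with ⟨a, ha, rfl⟩ | ⟨a, ha, rfl⟩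
    · simpa [comp_hS _ _ ha] using congrArg (fun f => LHom.hS f a) hm
    · simpa [comp_hS _ _ ha] using congrArg (fun f => LHom.hS f a) hc
  · rcases hmc.E e he with ⟨a, ha, rfl⟩ | ⟨a, ha, rfl⟩
    · simpa [comp_hE _ _ ha] using congrArg (fun f => LHom.hE f a) hm
    · simpa [comp_hE _ _ ha] using congrArg (fun f => LHom.hE f a) hc

variable {K L G W : LHypObj Sg} (k : K ⟶ L) (m : L ⟶ G) (hKE : K.1.E = ∅)

def complementObj : LHypObj Sg := ⟨complement (k ≫ m) m, complement.wf K.2 L.2 G.2 hKE⟩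

def toComplement : K ⟶ complementObj k m hKE :=
  LHom.ofCarrier K.2 (complement.isHomOn_corestrict hKE)

def ofComplement : complementObj k m hKE ⟶ G :=
  LHom.ofCarrier (complementObj k m hKE).2 (complement.isHomOn_incl L.2)

theorem toComplement_hT {t : ℕ} (ht : t ∈ K.1.T) :
    (toComplement k m hKE).hT t = (k ≫ m).hT t :=
  LHom.ofCarrier_hT _ _ ht

theorem toComplement_hS {t : ℕ} (ht : t ∈ K.1.S) :
    (toComplement k m hKE).hS t = (k ≫ m).hS t :=
  LHom.ofCarrier_hS _ _ ht

theorem ofComplement_hT {v : ℕ} (hv : v ∈ (complementObj k m hKE).1.T) :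
    (ofComplement k m hKE).hT v = v :=
  LHom.ofCarrier_hT _ _ hv

theorem ofComplement_hS {v : ℕ} (hv : v ∈ (complementObj k m hKE).1.S) :
    (ofComplement k m hKE).hS v = v :=
  LHom.ofCarrier_hS _ _ hv

theorem ofComplement_hE {e : ℕ} (he : e ∈ (complementObj k m hKE).1.E) :
    (ofComplement k m hKE).hE e = e :=
  LHom.ofCarrier_hE _ _ he

theorem comp_eq_toComplement_comp_ofComplement :
    k ≫ m = toComplement k m hKE ≫ ofComplement k m hKE := by
  refine LHom.ext_on (fun t ht => ?_) (fun t ht => ?_) (fun e he => by simp [hKE] at he)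
  · rw [comp_hT (toComplement k m hKE) _ ht,
      ofComplement_hT _ _ _ ((toComplement k m hKE).memT t ht),
      toComplement_hT _ _ _ ht]
  · rw [comp_hS (toComplement k m hKE) _ ht,
      ofComplement_hS _ _ _ ((toComplement k m hKE).memS t ht),
      toComplement_hS _ _ _ ht]

theorem jointlySurjective_ofComplement : JointlySurjective m (ofComplement k m hKE) where
  T v hv := by
    by_cases hvm : v ∈ L.1.T.map m.hT
    · exact Or.inl (List.mem_map.1 hvm)
    · have hvC : v ∈ (complementObj k m hKE).1.T := complement.mem_T.2 ⟨hv, Or.inr hvm⟩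
      exact Or.inr ⟨v, hvC, ofComplement_hT k m hKE hvC⟩
  S v hv := by
    by_cases hvm : v ∈ L.1.S.map m.hS
    · exact Or.inl (List.mem_map.1 hvm)
    · have hvC : v ∈ (complementObj k m hKE).1.S := complement.mem_S.2 ⟨hv, Or.inr hvm⟩
      exact Or.inr ⟨v, hvC, ofComplement_hS k m hKE hvC⟩
  E e he := by
    by_cases hem : e ∈ L.1.E.image m.hE
    · exact Or.inl (Finset.mem_image.1 hem)
    · have heC : e ∈ (complementObj k m hKE).1.E := complement.mem_E.2 ⟨he, hem⟩
      exact Or.inr ⟨e, heC, ofComplement_hE k m hKE heC⟩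

variable {k m}

variable {hKE} in
theorem compEqOn_ofComplement (hm : m.IsInjective) {f : L ⟶ W}
    {g : complementObj k m hKE ⟶ W} (w : k ≫ f = toComplement k m hKE ≫ g) :
    CompEqOn (ofComplement k m hKE) (extendOn L.1.T m.hT f.hT g.hT)
      (extendOn L.1.S m.hS f.hS g.hS) (extendOn L.1.E m.hE f.hE g.hE) g where
  T v hv := by
    rw [ofComplement_hT _ _ _ hv]
    obtain ⟨-, hvK | hvL⟩ := complement.mem_T.1 hv
    · obtain ⟨t, ht, rfl⟩ := List.mem_map.1 hvK
      have hw := congrArg (fun f => LHom.hT f t) w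
      simp only [comp_hT _ _ ht, toComplement_hT _ _ _ ht] at hw ⊢
      rw [extendOn_apply hm.injT (k.memT t ht), hw]
    · exact extendOn_of_forall_ne fun a ha hav => hvL (List.mem_map.2 ⟨a, ha, hav⟩)
  S v hv := by
    rw [ofComplement_hS _ _ _ hv]
    obtain ⟨-, hvK | hvL⟩ := complement.mem_S.1 hv
    · obtain ⟨t, ht, rfl⟩ := List.mem_map.1 hvK
      have hw := congrArg (fun f => LHom.hS f t) w
      simp only [comp_hS _ _ ht, toComplement_hS _ _ _ ht] at hw ⊢
      rw [extendOn_apply hm.injS (k.memS t ht), hw]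
    · exact extendOn_of_forall_ne fun a ha hav => hvL (List.mem_map.2 ⟨a, ha, hav⟩)
  E e he := by
    rw [ofComplement_hE _ _ _ he]
    exact extendOn_of_forall_ne fun a ha hae =>
      (complement.mem_E.1 he).2 (Finset.mem_image.2 ⟨a, ha, hae⟩)

theorem isPushout_complement (hm : m.IsInjective) :
    IsPushout k (toComplement k m hKE) m (ofComplement k m hKE) := by
  have hmc := jointlySurjective_ofComplement k m hKE
  let desc (s : Limits.PushoutCocone k (toComplement k m hKE)) : G ⟶ s.pt :=
    LHom.ofCarrier G.2 (IsHomOn.of_jointlySurjective L.2 (complementObj k m hKE).2 hmc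
      (hm.compEqOn_extendOn s.inl _ _ _) (compEqOn_ofComplement hm s.condition))
  have fac_left s : m ≫ desc s = s.inl := comp_ofCarrier_eq m _ (hm.compEqOn_extendOn s.inl _ _ _)
  have fac_right s : ofComplement k m hKE ≫ desc s = s.inr :=
    comp_ofCarrier_eq _ _ (compEqOn_ofComplement hm s.condition)
  exact IsPushout.of_isColimit (Limits.PushoutCocone.IsColimit.mk
    (comp_eq_toComplement_comp_ofComplement k m hKE) desc fac_left fac_right
    fun s _ h₁ h₂ => hmc.ext (h₁.trans (fac_left s).symm) (h₂.trans (fac_right s).symm))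

end Pushout

theorem i_matchings_general {Sg : Sig} (K L G : LHypObj Sg)
    (k : K ⟶ L)
    (hedgeless : K.1.E = ∅)
    (m : L ⟶ G) (hm : Mono m) :
    ∃ (C : LHypObj Sg) (c₁ : K ⟶ C) (c₂ : C ⟶ G), IsPushout k c₁ m c₂ :=
  ⟨_, _, _, isPushout_complement hedgeless (@LHom.isInjective_of_mono _ _ _ m hm)⟩

/-- **I-matchings.** For any rewrite rule `L ← K → R` — a span
of monomorphisms in `LHyp_Σ` with `K` edgeless — and any linear hypergraph
`G`, every monomorphism `L → G` in `LHyp_Σ` is an I-matching; that is, the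
composite `K → L → G` has a pushout complement `K → C → G` in `LHyp_Σ`. -/
theorem i_matchings {Sg : Sig} (K L R G : LHypObj Sg)
    (k : K ⟶ L) (ρ : K ⟶ R) (hk : Mono k) (hρ : Mono ρ)
    (hedgeless : K.1.E = ∅)
    (m : L ⟶ G) (hm : Mono m) :
    ∃ (C : LHypObj Sg) (c₁ : K ⟶ C) (c₂ : C ⟶ G), IsPushout k c₁ m c₂ :=
  i_matchings_general K L G k hedgeless m hm

end Paper
end

section
/- Bifunctoriality: for any m, n ∈ ℕ, id_m ⊗ id_n ≅ id_{m+n}, and for any linear hypergraphs F : m → n, G : r → s, H : n → p and K : s → t over Σ, (F ⊗ G) ⨾ (H ⊗ K) ≅ (F ⨾ H) ⊗ (G ⨾ K). -/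
/-!
Both sides of the interchange law are built from copies of `F`, `G`, `H`, `K` whose atoms are
renamed twice by the injections `k ↦ 2k` and `k ↦ 2k + 1`; the two sides apply these renamings in
opposite orders. Exchanging the two lowest binary digits of every atom is therefore an
isomorphism, once the vertex lists are reordered: the vertices coming from `G` and from `H` trade
places, which is harmless because no edge and neither interface has vertices of both. The only
real check is on connections through the glued interface: the `i`-th output of `F ⊗ G` is an
output of `F` or of `G` according as `i < n`, and the same split of inputs of `H ⊗ K` sends it
to `H` or `K` respectively. The unit law holds because `id_m ⊗ id_n` is `id_{m+n}` with the
atom `2k` of the left factor renamed to `k` and the atom `2k + 1` of the right one to `2m + k`.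
-/

namespace List

variable {α β : Type*}

theorem filter_map_of_forall_mem {l : List α} {f : α → β} {p : β → Bool} {q : α → Bool}
    (h : ∀ x ∈ l, p (f x) = q x) : (l.map f).filter p = (l.filter q).map f := by
  rw [filter_map, filter_congr (by simpa using h)]

theorem idxOf_map_of_injective [BEq α] [LawfulBEq α] [BEq β] [LawfulBEq β] {f : α → β}
    (hf : Function.Injective f) (l : List α) (a : α) : (l.map f).idxOf (f a) = l.idxOf a := by
  induction l with
  | nil => rfl
  | cons b l ih => by_cases h : b = a <;> simp [h, hf.eq_iff, ih]

theorem getD_map_of_lt {l : List α} {f : α → β} {n : ℕ} (d : β) (d' : α) (h : n < l.length) :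
    (l.map f).getD n d = f (l.getD n d') := by
  rw [getD_eq_getElem _ _ (by simpa using h), getD_eq_getElem _ _ h, getElem_map]

theorem perm_append_append_comm (l₁ l₂ l₃ l₄ : List α) :
    (l₁ ++ l₂ ++ (l₃ ++ l₄)).Perm (l₁ ++ l₃ ++ (l₂ ++ l₄)) := by
  simpa only [append_assoc] using (perm_append_comm_assoc l₂ l₃ l₄).append_left l₁

theorem filter_append_append_comm [DecidableEq β] {l₁ l₂ l₃ l₄ : List α} {f : α → β}
    (h : ∀ x ∈ l₂, ∀ y ∈ l₃, f x ≠ f y) (b : β) :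
    (l₁ ++ l₂ ++ (l₃ ++ l₄)).filter (f · = b) = (l₁ ++ l₃ ++ (l₂ ++ l₄)).filter (f · = b) := by
  have : l₂.filter (f · = b) = [] ∨ l₃.filter (f · = b) = [] := by
    by_contra! hne
    obtain ⟨x, hx⟩ := exists_mem_of_ne_nil _ hne.1
    obtain ⟨y, hy⟩ := exists_mem_of_ne_nil _ hne.2
    simp only [mem_filter, decide_eq_true_eq] at hx hy
    exact h x hx.1 y hy.1 (hx.2.trans hy.2.symm)
  rcases this with h₂ | h₃ <;> simp [filter_append, *]

end List

namespace Paper.LinHyp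

variable {Sg : Sig}

/-- `G` is `F` with its atoms renamed along `φT`, `φS`, `φE`, after the vertex lists of `F` have
been permuted to `T'` and `S'`. The permutations must keep the order inside every fibre of `ell`
and of `r`, since the orders of inputs, outputs and edge ports are read off these fibres. -/
structure Relabelling (F G : LinHyp Sg) where
  φT : ℕ → ℕ
  φS : ℕ → ℕ
  φE : ℕ → ℕ
  T' : List ℕ
  S' : List ℕ
  perm_T : T'.Perm F.T
  perm_S : S'.Perm F.S
  filter_ell : ∀ o, T'.filter (F.ell · = o) = F.T.filter (F.ell · = o)
  filter_r : ∀ o, S'.filter (F.r · = o) = F.S.filter (F.r · = o)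
  T_eq : G.T = T'.map φT
  S_eq : G.S = S'.map φS
  E_eq : G.E = F.E.image φE
  injOn_T : Set.InjOn φT {v | v ∈ F.T}
  injOn_S : Set.InjOn φS {v | v ∈ F.S}
  injective_E : φE.Injective
  ell_eq : ∀ v ∈ F.T, G.ell (φT v) = (F.ell v).map φE
  r_eq : ∀ v ∈ F.S, G.r (φS v) = (F.r v).map φE
  conn_eq : ∀ v ∈ F.T, G.conn (φT v) = φS (F.conn v)
  lab_eq : ∀ e ∈ F.E, G.lab (φE e) = F.lab e

namespace Relabelling

variable {F G : LinHyp Sg} (R : Relabelling F G)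

theorem filter_ell_map (o : Option ℕ) :
    G.T.filter (G.ell · = o.map R.φE) = (F.T.filter (F.ell · = o)).map R.φT := by
  rw [R.T_eq, List.filter_map_of_forall_mem (q := (F.ell · = o)), R.filter_ell]
  intro v hv
  simp [R.ell_eq v (R.perm_T.mem_iff.mp hv), (Option.map_injective R.injective_E).eq_iff]

theorem filter_r_map (o : Option ℕ) :
    G.S.filter (G.r · = o.map R.φE) = (F.S.filter (F.r · = o)).map R.φS := by
  rw [R.S_eq, List.filter_map_of_forall_mem (q := (F.r · = o)), R.filter_r]
  intro v hv
  simp [R.r_eq v (R.perm_S.mem_iff.mp hv), (Option.map_injective R.injective_E).eq_iff]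

def toIso : Iso F G where
  hT := R.φT
  hS := R.φS
  hE := R.φE
  memT v hv := R.T_eq ▸ List.mem_map_of_mem (R.perm_T.mem_iff.mpr hv)
  memS v hv := R.S_eq ▸ List.mem_map_of_mem (R.perm_S.mem_iff.mpr hv)
  memE e he := R.E_eq ▸ Finset.mem_image_of_mem _ he
  ell_comm := R.ell_eq
  r_comm := R.r_eq
  conn_comm v hv := (R.conn_eq v hv).symm
  lab_comm := R.lab_eq
  src_ord e _ := R.filter_r_map (some e)
  tgt_ord e _ := R.filter_ell_map (some e)
  injT := R.injOn_T
  surjT w hw := by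
    obtain ⟨v, hv, rfl⟩ := List.mem_map.mp (R.T_eq ▸ hw)
    exact ⟨v, R.perm_T.mem_iff.mp hv, rfl⟩
  injS := R.injOn_S
  surjS w hw := by
    obtain ⟨v, hv, rfl⟩ := List.mem_map.mp (R.S_eq ▸ hw)
    exact ⟨v, R.perm_S.mem_iff.mp hv, rfl⟩
  injE _ _ _ _ h := R.injective_E h
  surjE e he := Finset.mem_image.mp (R.E_eq ▸ he)
  inputs_ord := (R.filter_ell_map none).symm
  outputs_ord := (R.filter_r_map none).symm

theorem isom (R : Relabelling F G) : Isom F G := ⟨R.toIso⟩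

end Relabelling

@[simp] theorem two_mul_add_one_div_two (k : ℕ) : (2 * k + 1) / 2 = k := by omega

theorem two_mul_add_one_ne_two_mul {m n : ℕ} : 2 * m + 1 ≠ 2 * n := by omega

attribute [local simp] Nat.two_mul_ne_two_mul_add_one two_mul_add_one_ne_two_mul

theorem injective_two_mul : Function.Injective (2 * · : ℕ → ℕ) := fun _ _ h => by simpa using h

theorem injective_two_mul_add_one : Function.Injective (2 * · + 1 : ℕ → ℕ) :=
  fun _ _ h => by simpa using h

section Constructions

variable (F G : LinHyp Sg) {k : ℕ}

def nonInputs : List ℕ := F.T.filter fun v => (F.ell v).isSome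

def nonOutputs : List ℕ := F.S.filter fun v => (F.r v).isSome

theorem renL_outputs : (renL F).outputs = F.outputs.map (2 * ·) :=
  List.filter_map_of_forall_mem fun k _ => by simp [renL, rename]

theorem renR_inputs : (renR F).inputs = F.inputs.map (2 * · + 1) :=
  List.filter_map_of_forall_mem fun k _ => by simp [renR, rename]

theorem tensor_T : (tensor F G).T = F.T.map (2 * ·) ++ G.T.map (2 * · + 1) := rfl

theorem tensor_S : (tensor F G).S = F.S.map (2 * ·) ++ G.S.map (2 * · + 1) := rfl

theorem tensor_E : (tensor F G).E = F.E.image (2 * ·) ∪ G.E.image (2 * · + 1) := rfl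

variable {F} in
theorem tensor_ell_left (hk : k ∈ F.T) : (tensor F G).ell (2 * k) = (F.ell k).map (2 * ·) := by
  simp [tensor, tensorAux, renL, renR, rename, hk]

theorem tensor_ell_right (k : ℕ) : (tensor F G).ell (2 * k + 1) = (G.ell k).map (2 * · + 1) := by
  simp [tensor, tensorAux, renL, renR, rename]

variable {F} in
theorem tensor_r_left (hk : k ∈ F.S) : (tensor F G).r (2 * k) = (F.r k).map (2 * ·) := by
  simp [tensor, tensorAux, renL, renR, rename, hk]

theorem tensor_r_right (k : ℕ) : (tensor F G).r (2 * k + 1) = (G.r k).map (2 * · + 1) := by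
  simp [tensor, tensorAux, renL, renR, rename]

variable {F} in
theorem tensor_conn_left (hk : k ∈ F.T) : (tensor F G).conn (2 * k) = 2 * F.conn k := by
  simp [tensor, tensorAux, renL, renR, rename, hk]

theorem tensor_conn_right (k : ℕ) : (tensor F G).conn (2 * k + 1) = 2 * G.conn k + 1 := by
  simp [tensor, tensorAux, renL, renR, rename]

variable {F} in
theorem tensor_lab_left (hk : k ∈ F.E) : (tensor F G).lab (2 * k) = F.lab k := by
  simp [tensor, tensorAux, renL, renR, rename, hk]

theorem tensor_lab_right (k : ℕ) : (tensor F G).lab (2 * k + 1) = G.lab k := by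
  simp [tensor, tensorAux, renL, renR, rename]

theorem tensor_inputs :
    (tensor F G).inputs = F.inputs.map (2 * ·) ++ G.inputs.map (2 * · + 1) := by
  rw [inputs, tensor_T, List.filter_append]
  congr 1 <;> refine List.filter_map_of_forall_mem fun k hk => ?_
  · simp [tensor_ell_left G hk]
  · simp [tensor_ell_right]

theorem tensor_outputs :
    (tensor F G).outputs = F.outputs.map (2 * ·) ++ G.outputs.map (2 * · + 1) := by
  rw [outputs, tensor_S, List.filter_append]
  congr 1 <;> refine List.filter_map_of_forall_mem fun k hk => ?_
  · simp [tensor_r_left G hk]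
  · simp [tensor_r_right]

theorem nonInputs_tensor :
    (tensor F G).nonInputs = F.nonInputs.map (2 * ·) ++ G.nonInputs.map (2 * · + 1) := by
  rw [nonInputs, tensor_T, List.filter_append]
  congr 1 <;> refine List.filter_map_of_forall_mem fun k hk => ?_
  · simp [tensor_ell_left G hk]
  · simp [tensor_ell_right]

theorem nonOutputs_tensor :
    (tensor F G).nonOutputs = F.nonOutputs.map (2 * ·) ++ G.nonOutputs.map (2 * · + 1) := by
  rw [nonOutputs, tensor_S, List.filter_append]
  congr 1 <;> refine List.filter_map_of_forall_mem fun k hk => ?_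
  · simp [tensor_r_left G hk]
  · simp [tensor_r_right]

theorem comp_T : (comp F G).T = F.T.map (2 * ·) ++ G.nonInputs.map (2 * · + 1) :=
  congrArg _ (List.filter_map_of_forall_mem fun k _ => by simp [renR, rename])

theorem comp_S : (comp F G).S = F.nonOutputs.map (2 * ·) ++ G.S.map (2 * · + 1) :=
  congrArg (· ++ _) (List.filter_map_of_forall_mem fun k _ => by simp [renL, rename])

theorem comp_E : (comp F G).E = F.E.image (2 * ·) ∪ G.E.image (2 * · + 1) := rfl

variable {F} in
theorem comp_ell_left (hk : k ∈ F.T) : (comp F G).ell (2 * k) = (F.ell k).map (2 * ·) := by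
  simp [comp, compAux, renL, renR, rename, hk]

theorem comp_ell_right (k : ℕ) : (comp F G).ell (2 * k + 1) = (G.ell k).map (2 * · + 1) := by
  simp [comp, compAux, renL, renR, rename]

theorem comp_r_left (k : ℕ) : (comp F G).r (2 * k) = (F.r k).map (2 * ·) := by
  simp [comp, compAux, renL, renR, rename]

variable {G} in
theorem comp_r_right (hk : k ∈ G.S) : (comp F G).r (2 * k + 1) = (G.r k).map (2 * · + 1) := by
  simp [comp, compAux, renL, renR, rename, hk]

variable {F} in
theorem comp_lab_left (hk : k ∈ F.E) : (comp F G).lab (2 * k) = F.lab k := by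
  simp [comp, compAux, renL, renR, rename, hk]

theorem comp_lab_right (k : ℕ) : (comp F G).lab (2 * k + 1) = G.lab k := by
  simp [comp, compAux, renL, renR, rename]

theorem comp_conn_right (k : ℕ) : (comp F G).conn (2 * k + 1) = 2 * G.conn k + 1 := by
  simp [comp, compAux, renL, renR, rename]

variable {F} in
theorem comp_conn_left_of_isSome (hk : k ∈ F.T) (h : (F.r (F.conn k)).isSome) :
    (comp F G).conn (2 * k) = 2 * F.conn k := by
  simp [comp, compAux, renL, renR, rename, hk, h]

end Constructions

section Membership

variable {F G : LinHyp Sg} {k : ℕ}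

@[simp] theorem two_mul_mem_tensor_T : 2 * k ∈ (tensor F G).T ↔ k ∈ F.T := by simp [tensor_T]

@[simp] theorem two_mul_add_one_mem_tensor_T : 2 * k + 1 ∈ (tensor F G).T ↔ k ∈ G.T := by
  simp [tensor_T]

@[simp] theorem two_mul_mem_tensor_S : 2 * k ∈ (tensor F G).S ↔ k ∈ F.S := by simp [tensor_S]

@[simp] theorem two_mul_add_one_mem_tensor_S : 2 * k + 1 ∈ (tensor F G).S ↔ k ∈ G.S := by
  simp [tensor_S]

@[simp] theorem two_mul_mem_tensor_E : 2 * k ∈ (tensor F G).E ↔ k ∈ F.E := by simp [tensor_E]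

@[simp] theorem two_mul_add_one_mem_tensor_E : 2 * k + 1 ∈ (tensor F G).E ↔ k ∈ G.E := by
  simp [tensor_E]

@[simp] theorem two_mul_mem_comp_T : 2 * k ∈ (comp F G).T ↔ k ∈ F.T := by simp [comp_T]

@[simp] theorem two_mul_add_one_mem_comp_T :
    2 * k + 1 ∈ (comp F G).T ↔ k ∈ G.T ∧ (G.ell k).isSome := by
  simp [comp_T, nonInputs]

@[simp] theorem two_mul_mem_comp_S : 2 * k ∈ (comp F G).S ↔ k ∈ F.S ∧ (F.r k).isSome := by
  simp [comp_S, nonOutputs]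

@[simp] theorem two_mul_add_one_mem_comp_S : 2 * k + 1 ∈ (comp F G).S ↔ k ∈ G.S := by
  simp [comp_S]

@[simp] theorem two_mul_mem_comp_E : 2 * k ∈ (comp F G).E ↔ k ∈ F.E := by simp [comp_E]

@[simp] theorem two_mul_add_one_mem_comp_E : 2 * k + 1 ∈ (comp F G).E ↔ k ∈ G.E := by
  simp [comp_E]

end Membership

section Interface

variable {F G H K : LinHyp Sg} {k w x y : ℕ}

theorem mem_outputs_of_not_isSome (hw : w ∈ F.S) (h : ¬(F.r w).isSome) : w ∈ F.outputs :=
  List.mem_filter.mpr ⟨hw, by simpa using h⟩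

def plug (F G : LinHyp Sg) (w : ℕ) : ℕ := G.inputs.getD (F.outputs.idxOf w) 0

theorem plug_mem_T (hw : w ∈ F.outputs) (hFG : F.outputs.length = G.inputs.length) :
    plug F G w ∈ G.T := by
  have hi : F.outputs.idxOf w < G.inputs.length := hFG ▸ List.idxOf_lt_length_of_mem hw
  rw [plug, List.getD_eq_getElem _ _ hi]
  exact (List.mem_filter.mp (List.getElem_mem hi)).1

theorem comp_conn_left_of_mem_outputs (hk : k ∈ F.T) (hw : F.conn k ∈ F.outputs)
    (hFG : F.outputs.length = G.inputs.length) :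
    (comp F G).conn (2 * k) = 2 * G.conn (plug F G (F.conn k)) + 1 := by
  have hr : F.r (F.conn k) = none := by simpa using (List.mem_filter.mp hw).2
  have hi : F.outputs.idxOf (F.conn k) < G.inputs.length :=
    hFG ▸ List.idxOf_lt_length_of_mem hw
  have hconn : (renL F).conn (2 * k) = 2 * F.conn k := by simp [renL, rename]
  simp only [comp, compAux, renL_outputs, renR_inputs, hconn,
    List.idxOf_map_of_injective injective_two_mul, List.getD_map_of_lt _ 0 hi]
  simp [renL, renR, rename, hk, hr, plug]

theorem tensor_outputs_length_eq (hFH : F.outputs.length = H.inputs.length)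
    (hGK : G.outputs.length = K.inputs.length) :
    (tensor F G).outputs.length = (tensor H K).inputs.length := by
  simp [tensor_outputs, tensor_inputs, hFH, hGK]

theorem plug_tensor_left (hw : w ∈ F.outputs) (hFH : F.outputs.length = H.inputs.length) :
    plug (tensor F G) (tensor H K) (2 * w) = 2 * plug F H w := by
  have hi : F.outputs.idxOf w < H.inputs.length := hFH ▸ List.idxOf_lt_length_of_mem hw
  rw [plug, tensor_outputs, tensor_inputs, List.idxOf_append_of_mem (List.mem_map_of_mem hw),
    List.idxOf_map_of_injective injective_two_mul, List.getD_append _ _ _ _ (by simpa using hi),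
    List.getD_map_of_lt _ 0 hi, plug]

theorem plug_tensor_right (hw : w ∈ G.outputs) (hFH : F.outputs.length = H.inputs.length)
    (hGK : G.outputs.length = K.inputs.length) :
    plug (tensor F G) (tensor H K) (2 * w + 1) = 2 * plug G K w + 1 := by
  have hi : G.outputs.idxOf w < K.inputs.length := hGK ▸ List.idxOf_lt_length_of_mem hw
  rw [plug, tensor_outputs, tensor_inputs, List.idxOf_append_of_notMem (by simp),
    List.idxOf_map_of_injective injective_two_mul_add_one,
    List.getD_append_right _ _ _ _ (by simp [hFH]), List.length_map, List.length_map, hFH,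
    Nat.add_sub_cancel_left, List.getD_map_of_lt _ 0 hi, plug]

theorem comp_ell_ne (hx : 2 * x ∈ (comp F G).T) (hy : 2 * y + 1 ∈ (comp F G).T) :
    (comp F G).ell (2 * x) ≠ (comp F G).ell (2 * y + 1) := by
  simp only [two_mul_mem_comp_T, two_mul_add_one_mem_comp_T, Option.isSome_iff_exists] at hx hy
  obtain ⟨-, e, he⟩ := hy
  rw [comp_ell_left G hx, comp_ell_right, he]
  cases F.ell x <;> simp

theorem comp_r_ne (hx : 2 * x ∈ (comp F G).S) (hy : 2 * y + 1 ∈ (comp F G).S) :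
    (comp F G).r (2 * x) ≠ (comp F G).r (2 * y + 1) := by
  simp only [two_mul_mem_comp_S, two_mul_add_one_mem_comp_S, Option.isSome_iff_exists] at hx hy
  obtain ⟨-, e, he⟩ := hx
  rw [comp_r_left, comp_r_right F hy, he]
  cases G.r y <;> simp

end Interface

/-- The atom `2 * (2 * k + i) + j` of `(F ⊗ G) ⨾ (H ⊗ K)` comes from the `i`-th tensor factor of
the `j`-th composition factor; in `(F ⨾ H) ⊗ (G ⨾ K)` the same vertex is `2 * (2 * k + j) + i`. -/
def swapDigits (v : ℕ) : ℕ := if v % 4 = 1 then v + 1 else if v % 4 = 2 then v - 1 else v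

theorem swapDigits_involutive : Function.Involutive swapDigits := fun v => by
  unfold swapDigits; split_ifs <;> omega

@[simp] theorem swapDigits_even_even (k : ℕ) : swapDigits (2 * (2 * k)) = 2 * (2 * k) := by
  unfold swapDigits; split_ifs <;> omega

@[simp] theorem swapDigits_even_odd (k : ℕ) :
    swapDigits (2 * (2 * k + 1)) = 2 * (2 * k) + 1 := by
  unfold swapDigits; split_ifs <;> omega

@[simp] theorem swapDigits_odd_even (k : ℕ) :
    swapDigits (2 * (2 * k) + 1) = 2 * (2 * k + 1) := by
  unfold swapDigits; split_ifs <;> omega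

@[simp] theorem swapDigits_odd_odd (k : ℕ) :
    swapDigits (2 * (2 * k + 1) + 1) = 2 * (2 * k + 1) + 1 := by
  unfold swapDigits; split_ifs <;> omega

section Interchange

variable (F G H K : LinHyp Sg)

theorem comp_tensor_T : (comp (tensor F G) (tensor H K)).T =
    (F.T.map (2 * ·)).map (2 * ·) ++ (G.T.map (2 * · + 1)).map (2 * ·) ++
      ((H.nonInputs.map (2 * ·)).map (2 * · + 1) ++
        (K.nonInputs.map (2 * · + 1)).map (2 * · + 1)) := by
  rw [comp_T, nonInputs_tensor, tensor_T, List.map_append, List.map_append]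

theorem comp_tensor_S : (comp (tensor F G) (tensor H K)).S =
    (F.nonOutputs.map (2 * ·)).map (2 * ·) ++ (G.nonOutputs.map (2 * · + 1)).map (2 * ·) ++
      ((H.S.map (2 * ·)).map (2 * · + 1) ++ (K.S.map (2 * · + 1)).map (2 * · + 1)) := by
  rw [comp_S, nonOutputs_tensor, tensor_S, List.map_append, List.map_append]

theorem comp_tensor_E : (comp (tensor F G) (tensor H K)).E =
    (F.E.image (2 * ·)).image (2 * ·) ∪ (G.E.image (2 * · + 1)).image (2 * ·) ∪
      ((H.E.image (2 * ·)).image (2 * · + 1) ∪ (K.E.image (2 * · + 1)).image (2 * · + 1)) := by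
  rw [comp_E, tensor_E, tensor_E, Finset.image_union, Finset.image_union]

variable {F G H K} {k : ℕ}

theorem tensor_comp_conn_left (wF : F.WF) (hFH : F.outputs.length = H.inputs.length)
    (hGK : G.outputs.length = K.inputs.length) (hk : k ∈ F.T) :
    (tensor (comp F H) (comp G K)).conn (2 * (2 * k)) =
      swapDigits ((comp (tensor F G) (tensor H K)).conn (2 * (2 * k))) := by
  have hk' : 2 * k ∈ (tensor F G).T := by simpa using hk
  have hc : (tensor F G).conn (2 * k) = 2 * F.conn k := tensor_conn_left G hk
  rw [tensor_conn_left _ (by simpa using hk)]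
  by_cases h : (F.r (F.conn k)).isSome
  · have h' : ((tensor F G).r ((tensor F G).conn (2 * k))).isSome := by
      simpa [hc, tensor_r_left G (wF.conn_mem k hk)] using h
    rw [comp_conn_left_of_isSome _ hk' h', hc, comp_conn_left_of_isSome H hk h,
      swapDigits_even_even]
  · have hw := mem_outputs_of_not_isSome (wF.conn_mem k hk) h
    have hw' : (tensor F G).conn (2 * k) ∈ (tensor F G).outputs := by
      simp [hc, tensor_outputs, hw]
    rw [comp_conn_left_of_mem_outputs hk' hw' (tensor_outputs_length_eq hFH hGK), hc,
      plug_tensor_left hw hFH, tensor_conn_left K (plug_mem_T hw hFH),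
      comp_conn_left_of_mem_outputs hk hw hFH, swapDigits_odd_even]

theorem tensor_comp_conn_right (wG : G.WF) (hFH : F.outputs.length = H.inputs.length)
    (hGK : G.outputs.length = K.inputs.length) (hk : k ∈ G.T) :
    (tensor (comp F H) (comp G K)).conn (2 * (2 * k) + 1) =
      swapDigits ((comp (tensor F G) (tensor H K)).conn (2 * (2 * k + 1))) := by
  have hk' : 2 * k + 1 ∈ (tensor F G).T := by simpa using hk
  have hc : (tensor F G).conn (2 * k + 1) = 2 * G.conn k + 1 := tensor_conn_right F G k
  rw [tensor_conn_right]
  by_cases h : (G.r (G.conn k)).isSome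
  · have h' : ((tensor F G).r ((tensor F G).conn (2 * k + 1))).isSome := by
      simpa [hc, tensor_r_right] using h
    rw [comp_conn_left_of_isSome _ hk' h', hc, comp_conn_left_of_isSome K hk h,
      swapDigits_even_odd]
  · have hw := mem_outputs_of_not_isSome (wG.conn_mem k hk) h
    have hw' : (tensor F G).conn (2 * k + 1) ∈ (tensor F G).outputs := by
      simp [hc, tensor_outputs, hw]
    rw [comp_conn_left_of_mem_outputs hk' hw' (tensor_outputs_length_eq hFH hGK), hc,
      plug_tensor_right hw hFH hGK, tensor_conn_right,
      comp_conn_left_of_mem_outputs hk hw hGK, swapDigits_odd_odd]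

def Relabelling.compTensor (wF : F.WF) (wG : G.WF) (hFH : F.outputs.length = H.inputs.length)
    (hGK : G.outputs.length = K.inputs.length) :
    Relabelling (comp (tensor F G) (tensor H K)) (tensor (comp F H) (comp G K)) where
  φT := swapDigits
  φS := swapDigits
  φE := swapDigits
  T' := (F.T.map (2 * ·)).map (2 * ·) ++ (H.nonInputs.map (2 * ·)).map (2 * · + 1) ++
      ((G.T.map (2 * · + 1)).map (2 * ·) ++ (K.nonInputs.map (2 * · + 1)).map (2 * · + 1))
  S' := (F.nonOutputs.map (2 * ·)).map (2 * ·) ++ (H.S.map (2 * ·)).map (2 * · + 1) ++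
      ((G.nonOutputs.map (2 * · + 1)).map (2 * ·) ++ (K.S.map (2 * · + 1)).map (2 * · + 1))
  perm_T := comp_tensor_T F G H K ▸ List.perm_append_append_comm ..
  perm_S := comp_tensor_S F G H K ▸ List.perm_append_append_comm ..
  filter_ell o := by
    rw [comp_tensor_T]
    refine (List.filter_append_append_comm ?_ o).symm
    simp only [List.mem_map, nonInputs, List.mem_filter]
    rintro _ ⟨_, ⟨k, hk, rfl⟩, rfl⟩ _ ⟨_, ⟨j, ⟨hj, hj'⟩, rfl⟩, rfl⟩
    exact comp_ell_ne (by simpa using hk) (by simp [hj, tensor_ell_left, hj'])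
  filter_r o := by
    rw [comp_tensor_S]
    refine (List.filter_append_append_comm ?_ o).symm
    simp only [List.mem_map, nonOutputs, List.mem_filter]
    rintro _ ⟨_, ⟨k, ⟨hk, hk'⟩, rfl⟩, rfl⟩ _ ⟨_, ⟨j, hj, rfl⟩, rfl⟩
    exact comp_r_ne (by simp [hk, tensor_r_right, hk']) (by simpa using hj)
  T_eq := by simp [tensor_T, comp_T, List.map_map, Function.comp_def]
  S_eq := by simp [tensor_S, comp_S, List.map_map, Function.comp_def]
  E_eq := by
    rw [comp_tensor_E, Finset.union_union_union_comm]
    simp [tensor_E, comp_E, Finset.image_union, Finset.image_image, Function.comp_def]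
  injOn_T := swapDigits_involutive.injective.injOn
  injOn_S := swapDigits_involutive.injective.injOn
  injective_E := swapDigits_involutive.injective
  ell_eq v hv := by
    rw [comp_tensor_T] at hv
    simp only [List.mem_append, List.mem_map, nonInputs, List.mem_filter] at hv
    rcases hv with ((⟨_, ⟨k, hk, rfl⟩, rfl⟩ | ⟨_, ⟨k, hk, rfl⟩, rfl⟩) |
      (⟨_, ⟨k, ⟨hk, hk'⟩, rfl⟩, rfl⟩ | ⟨_, ⟨k, -, rfl⟩, rfl⟩)) <;>
    simp [*, tensor_ell_left, tensor_ell_right, comp_ell_left, comp_ell_right, Option.map_map,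
      Function.comp_def]
  r_eq v hv := by
    rw [comp_tensor_S] at hv
    simp only [List.mem_append, List.mem_map, nonOutputs, List.mem_filter] at hv
    rcases hv with ((⟨_, ⟨k, ⟨hk, hk'⟩, rfl⟩, rfl⟩ | ⟨_, ⟨k, -, rfl⟩, rfl⟩) |
      (⟨_, ⟨k, hk, rfl⟩, rfl⟩ | ⟨_, ⟨k, hk, rfl⟩, rfl⟩)) <;>
    simp [*, tensor_r_left, tensor_r_right, comp_r_left, comp_r_right, Option.map_map,
      Function.comp_def]
  conn_eq v hv := by
    rw [comp_tensor_T] at hv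
    simp only [List.mem_append, List.mem_map, nonInputs, List.mem_filter] at hv
    rcases hv with ((⟨_, ⟨k, hk, rfl⟩, rfl⟩ | ⟨_, ⟨k, hk, rfl⟩, rfl⟩) |
      (⟨_, ⟨k, ⟨hk, hk'⟩, rfl⟩, rfl⟩ | ⟨_, ⟨k, -, rfl⟩, rfl⟩))
    · simpa using tensor_comp_conn_left wF hFH hGK hk
    · simpa using tensor_comp_conn_right wG hFH hGK hk
    · simp [*, tensor_conn_left, comp_conn_right]
    · simp [tensor_conn_right, comp_conn_right]
  lab_eq e he := by
    rw [comp_tensor_E] at he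
    simp only [Finset.mem_union, Finset.mem_image] at he
    rcases he with ((⟨_, ⟨k, hk, rfl⟩, rfl⟩ | ⟨_, ⟨k, hk, rfl⟩, rfl⟩) |
      (⟨_, ⟨k, hk, rfl⟩, rfl⟩ | ⟨_, ⟨k, hk, rfl⟩, rfl⟩)) <;>
    simp [*, tensor_lab_left, tensor_lab_right, comp_lab_left, comp_lab_right]

end Interchange

section Unit

def idMerge (m v : ℕ) : ℕ := if v % 2 = 0 then v / 2 else 2 * m + v / 2

@[simp] theorem idMerge_two_mul (m k : ℕ) : idMerge m (2 * k) = k := by simp [idMerge]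

@[simp] theorem idMerge_two_mul_add_one (m k : ℕ) : idMerge m (2 * k + 1) = 2 * m + k := by
  simp [idMerge]

variable {m n v : ℕ}

theorem mem_tensor_idH_T : v ∈ (tensor (idH Sg m) (idH Sg n)).T ↔
    (∃ i < m, 2 * (2 * i) = v) ∨ ∃ i < n, 2 * (2 * i) + 1 = v := by
  simp [tensor_T, idH, ← mul_assoc]

theorem mem_tensor_idH_S : v ∈ (tensor (idH Sg m) (idH Sg n)).S ↔
    (∃ i < m, 2 * (2 * i + 1) = v) ∨ ∃ i < n, 2 * (2 * i + 1) + 1 = v := by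
  simp [tensor_S, idH]

def Relabelling.tensorIdH (Sg : Sig) (m n : ℕ) :
    Relabelling (tensor (idH Sg m) (idH Sg n)) (idH Sg (m + n)) where
  φT := idMerge m
  φS := idMerge m
  φE := id
  T' := (tensor (idH Sg m) (idH Sg n)).T
  S' := (tensor (idH Sg m) (idH Sg n)).S
  perm_T := .refl _
  perm_S := .refl _
  filter_ell _ := rfl
  filter_r _ := rfl
  T_eq := by simp [idH, tensor_T, List.range_add, List.map_map, Function.comp_def, mul_add]
  S_eq := by
    simp [idH, tensor_S, List.range_add, List.map_map, Function.comp_def]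
    omega
  E_eq := by simp [tensor_E, idH]
  injOn_T v₁ h₁ v₂ h₂ h := by
    obtain ⟨i, hi, rfl⟩ | ⟨i, hi, rfl⟩ := mem_tensor_idH_T.mp h₁ <;>
    obtain ⟨j, hj, rfl⟩ | ⟨j, hj, rfl⟩ := mem_tensor_idH_T.mp h₂ <;>
    simp at h <;> omega
  injOn_S v₁ h₁ v₂ h₂ h := by
    obtain ⟨i, hi, rfl⟩ | ⟨i, hi, rfl⟩ := mem_tensor_idH_S.mp h₁ <;>
    obtain ⟨j, hj, rfl⟩ | ⟨j, hj, rfl⟩ := mem_tensor_idH_S.mp h₂ <;>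
    simp at h <;> omega
  injective_E := Function.injective_id
  ell_eq _ _ := by simp [tensor, tensorAux, renL, renR, rename, idH]
  r_eq _ _ := by simp [tensor, tensorAux, renL, renR, rename, idH]
  conn_eq v hv := by
    obtain ⟨i, hi, rfl⟩ | ⟨i, -, rfl⟩ := mem_tensor_idH_T.mp hv
    · rw [tensor_conn_left _ (by simpa [idH] using hi)]
      simp [idH]
    · rw [tensor_conn_right]
      simp [idH]
      ring
  lab_eq e he := by simp [tensor_E, idH] at he

end Unit

end Paper.LinHyp

namespace Paper

open LinHyp

/-- **Bifunctoriality.** For any `m, n ∈ ℕ`,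
`id_m ⊗ id_n ≅ id_{m+n}`, and for any linear hypergraphs `F : m → n`,
`G : r → s`, `H : n → p` and `K : s → t` over `Σ`,
`(F ⊗ G) ⨾ (H ⊗ K) ≅ (F ⨾ H) ⊗ (G ⨾ K)`. -/
theorem bifunctoriality (Sg : Sig) :
    (∀ m n : ℕ, Isom (tensor (idH Sg m) (idH Sg n)) (idH Sg (m + n))) ∧
    (∀ (m n p r s t : ℕ) (F G H K : LinHyp Sg), F.WF → G.WF → H.WF → K.WF →
      F.HasType m n → G.HasType r s → H.HasType n p → K.HasType s t →
      Isom (comp (tensor F G) (tensor H K)) (tensor (comp F H) (comp G K))) :=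
  ⟨fun m n => (Relabelling.tensorIdH Sg m n).isom,
    fun _ _ _ _ _ _ _ _ _ _ wF wG _ _ hF hG hH hK =>
      (Relabelling.compTensor wF wG (hF.2.trans hH.1.symm) (hG.2.trans hK.1.symm)).isom⟩

end Paper
end
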